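/- arXiv:2102.12229 — 6 statements merged into one kernel-verified Lean document; each statement's English description precedes it below -/
import Mathlib

section
/- Let N ≥ 1, Δx = 1/(N+1), and let L_N be the N×N matrix (1/Δx²)·tridiag(1,−2,1). For every τ > 0 and every nonzero z ∈ ℂ with z = |z|e^{iθ}, |θ| < π, the matrix zI − τL_N is invertible and ‖(zI − τL_N)⁻¹‖_∞ ≤ sec(θ/2)/|z|. -/
open scoped BigOperators

/-- The `N × N` matrix `(1/Δx²)·tridiag(1, −2, 1)` with `Δx = 1/(N+1)`. -/
noncomputable def lmat (N : ℕ) : Matrix (Fin N) (Fin N) ℝ :=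
  Matrix.of fun i j =>
    ((N : ℝ) + 1) ^ 2 *
      (if (i : ℕ) = (j : ℕ) then (-2 : ℝ)
       else if (i : ℕ) + 1 = (j : ℕ) ∨ (j : ℕ) + 1 = (i : ℕ) then 1 else 0)

/-- The matrix norm induced by the maximum norm: maximum absolute row sum. -/
noncomputable def matNormC {ι : Type*} [Fintype ι] (A : Matrix ι ι ℂ) : ℝ :=
  ⨆ i, ∑ j, ‖A i j‖

/-!
Put `κ = τ / Δx²`. On grid functions `f : ℤ → ℂ` vanishing at `0` and `N + 1`, the matrix
`z I - τ L_N` acts as `(z + 2κ) f(I) - κ (f(I - 1) + f(I + 1))`. The characteristic equation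
`z l = κ (1 - l)²` has roots `l` and `l⁻¹`, and when `z` is off the closed negative real axis one
of them satisfies `ρ = |l| < 1`: two unimodular roots would make `z = κ (l + conj l - 2) ≤ 0`.
The kernel `l^|I - K|` solves the recurrence except for a jump `z + 2κ(1 - l)` at `I = K`;
subtracting the mirror image `l^(I + K)` and adding the same combination for `l⁻¹`, weighted by
`l^(2(N+1))`, enforces both boundary conditions and gives the inverse matrix in closed form.

Each entry is then at most `P(|I - K|) + P(I + K)` divided by `|z + 2κ(1 - l)| (1 - ρ^(2(N+1)))`,
where `P(e) = ρ^e + ρ^(2(N+1) - e)`. Since `P(e) = P(2(N+1) - e)`, we may read `I - K` modulo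
`2(N+1)`; as `K` runs over `1, …, N` these residues and the numbers `I + K` are pairwise distinct
points of `[0, 2(N+1))`, so a row sum is at most `∑ P = (1 + ρ)(1 - ρ^(2(N+1))) / (1 - ρ)`.
The resulting bound `(1 + ρ) / ((1 - ρ) |z + 2κ(1 - l)|)` is at most `sec(θ/2) / |z|`: in the
coordinates of `l`, `2 cos²(θ/2) = 1 + Re z / |z|` turns this into `0 ≤ (ρ - Re l)(1 - ρ)⁴`.
-/

open Finset Complex ComplexConjugate

lemma exists_norm_lt_one_mul_eq {z : ℂ} (hz : z ∈ slitPlane) {κ : ℝ} (hκ : 0 < κ) :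
    ∃ l : ℂ, ‖l‖ < 1 ∧ z * l = κ * (1 - l) ^ 2 := by
  have hκ0 : (κ : ℂ) ≠ 0 := ofReal_ne_zero.2 hκ.ne'
  obtain ⟨l, hl⟩ := exists_quadratic_eq_zero (b := -(z + 2 * κ)) (c := (κ : ℂ)) hκ0
    (IsAlgClosed.exists_eq_mul_self _)
  have hroot : z * l = κ * (1 - l) ^ 2 := by linear_combination -hl
  have hl0 : l ≠ 0 := by
    rintro rfl
    exact hκ0 (by simpa using hroot.symm)
  rcases lt_trichotomy ‖l‖ 1 with h | h | h
  · exact ⟨l, h, hroot⟩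
  · exfalso
    have hinv : l⁻¹ = conj l := by
      rw [inv_def, normSq_eq_norm_sq, h]
      simp
    have hz' : z = κ * (l + conj l - 2) := by
      rw [← hinv]
      field_simp
      linear_combination hroot
    rw [mem_slitPlane_iff, hz', add_conj] at hz
    have := re_le_norm l
    simp only [mul_re, mul_im, ofReal_re, ofReal_im, sub_re, sub_im, re_ofNat, im_ofNat] at hz
    rcases hz with hz | hz
    · nlinarith
    · simp at hz
  · refine ⟨l⁻¹, by rw [norm_inv]; exact inv_lt_one_of_one_lt₀ h, ?_⟩
    field_simp
    linear_combination hroot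

noncomputable def resolventStencil (z κ : ℂ) : (ℤ → ℂ) →ₗ[ℂ] ℤ → ℂ where
  toFun f I := (z + 2 * κ) * f I - κ * (f (I - 1) + f (I + 1))
  map_add' f g := by ext; simp only [Pi.add_apply]; ring
  map_smul' c f := by ext; simp only [Pi.smul_apply, smul_eq_mul, RingHom.id_apply]; ring

lemma resolventStencil_apply (z κ : ℂ) (f : ℤ → ℂ) (I : ℤ) :
    resolventStencil z κ f I = (z + 2 * κ) * f I - κ * (f (I - 1) + f (I + 1)) := rfl

section CharacteristicRoot

variable {z κ r : ℂ}

lemma mul_zpow_sub_one_add_zpow_add_one (hr : r ≠ 0) (hroot : z * r = κ * (1 - r) ^ 2) (n : ℤ) :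
    κ * (r ^ (n - 1) + r ^ (n + 1)) = (z + 2 * κ) * r ^ n := by
  have h : κ * (r⁻¹ + r) = z + 2 * κ := by
    field_simp
    linear_combination -hroot
  rw [zpow_sub_one₀ hr, zpow_add_one₀ hr, ← h]
  ring

lemma mul_inv_eq_mul_one_sub_inv_sq (hr : r ≠ 0) (hroot : z * r = κ * (1 - r) ^ 2) :
    z * r⁻¹ = κ * (1 - r⁻¹) ^ 2 := by
  field_simp
  linear_combination hroot

lemma resolventStencil_zpow_add (hr : r ≠ 0) (hroot : z * r = κ * (1 - r) ^ 2) (c I : ℤ) :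
    resolventStencil z κ (fun J => r ^ (J + c)) I = 0 := by
  have h := mul_zpow_sub_one_add_zpow_add_one hr hroot (I + c)
  rw [resolventStencil_apply, show I - 1 + c = I + c - 1 by ring,
    show I + 1 + c = I + c + 1 by ring, h, sub_self]

lemma resolventStencil_zpow_abs_sub (hr : r ≠ 0) (hroot : z * r = κ * (1 - r) ^ 2) (K I : ℤ) :
    resolventStencil z κ (fun J => r ^ |J - K|) I = if I = K then z + 2 * κ * (1 - r) else 0 := by
  rw [resolventStencil_apply]
  rcases lt_trichotomy I K with h | rfl | h
  · have h := mul_zpow_sub_one_add_zpow_add_one hr hroot (K - I)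
    rw [abs_of_neg (by omega), abs_of_neg (by omega), abs_of_nonpos (by omega), if_neg (by omega),
      show -(I - 1 - K) = K - I + 1 by ring, show -(I + 1 - K) = K - I - 1 by ring,
      show -(I - K) = K - I by ring]
    linear_combination -h
  · simp only [sub_self, abs_zero, zpow_zero, sub_sub_cancel_left, abs_neg, abs_one, zpow_one,
      add_sub_cancel_left, if_true]
    ring
  · have h := mul_zpow_sub_one_add_zpow_add_one hr hroot (I - K)
    rw [abs_of_pos (by omega), abs_of_nonneg (by omega), abs_of_pos (by omega), if_neg (by omega),
      show I - 1 - K = I - K - 1 by ring, show I + 1 - K = I - K + 1 by ring]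
    linear_combination -h

noncomputable def imageKernel (r : ℂ) (K : ℤ) : ℤ → ℂ := fun I => r ^ |I - K| - r ^ (I + K)

lemma resolventStencil_imageKernel (hr : r ≠ 0) (hroot : z * r = κ * (1 - r) ^ 2) (K I : ℤ) :
    resolventStencil z κ (imageKernel r K) I = if I = K then z + 2 * κ * (1 - r) else 0 := by
  have h : imageKernel r K = (fun J => r ^ |J - K|) - (fun J => r ^ (J + K)) := rfl
  rw [h, map_sub, Pi.sub_apply, resolventStencil_zpow_abs_sub hr hroot,
    resolventStencil_zpow_add hr hroot, sub_zero]

end CharacteristicRoot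

noncomputable def dirichletGreen (z κ l : ℂ) (M : ℕ) (K : ℤ) : ℤ → ℂ :=
  ((z + 2 * κ * (1 - l)) * (1 - l ^ (2 * M)))⁻¹ •
    (imageKernel l K + l ^ (2 * M) • imageKernel l⁻¹ K)

section Green

variable {z κ l : ℂ} {M : ℕ}

lemma resolventStencil_dirichletGreen (hl : l ≠ 0) (hroot : z * l = κ * (1 - l) ^ 2)
    (hW : (z + 2 * κ * (1 - l)) * (1 - l ^ (2 * M)) ≠ 0) (K I : ℤ) :
    resolventStencil z κ (dirichletGreen z κ l M K) I = if I = K then 1 else 0 := by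
  have hjump : z + 2 * κ * (1 - l⁻¹) = -(z + 2 * κ * (1 - l)) := by
    field_simp
    linear_combination 2 * hroot
  simp only [dirichletGreen, map_smul, map_add, Pi.smul_apply, Pi.add_apply, smul_eq_mul,
    resolventStencil_imageKernel hl hroot,
    resolventStencil_imageKernel (inv_ne_zero hl) (mul_inv_eq_mul_one_sub_inv_sq hl hroot), hjump]
  split_ifs
  · convert inv_mul_cancel₀ hW using 2
    ring
  · simp

lemma dirichletGreen_apply_zero {K : ℤ} (hK : 0 ≤ K) : dirichletGreen z κ l M K 0 = 0 := by
  simp [dirichletGreen, imageKernel, abs_of_nonneg hK]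

lemma dirichletGreen_apply_boundary (hl : l ≠ 0) {K : ℤ} (hK : K ≤ M) :
    dirichletGreen z κ l M K M = 0 := by
  simp only [dirichletGreen, imageKernel, Pi.smul_apply, Pi.add_apply, smul_eq_mul,
    abs_of_nonneg (sub_nonneg.2 hK), inv_zpow']
  refine mul_eq_zero_of_right _ ?_
  rw [mul_sub, ← zpow_natCast, ← zpow_add₀ hl, ← zpow_add₀ hl,
    show ((2 * M : ℕ) : ℤ) + -(M - K) = M + K by push_cast; ring,
    show ((2 * M : ℕ) : ℤ) + -(M + K) = M - K by push_cast; ring]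
  ring

end Green

lemma sum_fin_ite_val_eq {N m : ℕ} (g : ℕ → ℂ) (hm : m ≤ N) (hg : g N = 0) :
    ∑ j : Fin N, (if (j : ℕ) = m then g j else 0) = g m := by
  rw [Fin.sum_univ_eq_sum_range (fun n => if n = m then g n else 0), sum_ite_eq']
  split_ifs with h
  · rfl
  · rw [mem_range, not_lt] at h
    rw [le_antisymm hm h, hg]

open Matrix in
lemma lmat_map_mulVec (N : ℕ) (f : ℤ → ℂ) (h0 : f 0 = 0) (hN : f (N + 1) = 0) (i : Fin N) :
    ((lmat N).map Complex.ofReal *ᵥ fun j : Fin N => f ((j : ℤ) + 1)) i =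
      ((N : ℂ) + 1) ^ 2 * (f i - 2 * f (i + 1) + f (i + 2)) := by
  have hterm (j : Fin N) : ((lmat N).map Complex.ofReal) i j * f ((j : ℤ) + 1) =
      ((N : ℂ) + 1) ^ 2 * ((if (j : ℕ) = i then -2 * f ((j : ℕ) + 1) else 0) +
        (if (j : ℕ) = i + 1 then f ((j : ℕ) + 1) else 0) +
        (if (j : ℕ) + 1 = i then f ((j : ℕ) + 1) else 0)) := by
    simp only [Matrix.map_apply, lmat, Matrix.of_apply]
    split_ifs <;> first | omega | push_cast; ring
  have hprev : ∑ j : Fin N, (if (j : ℕ) + 1 = i then f ((j : ℕ) + 1) else 0) = f i := by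
    rcases Nat.eq_zero_or_eq_succ_pred (i : ℕ) with h | h
    · simp [h, h0]
    · rw [h]
      simp only [Nat.succ_eq_add_one, add_left_inj]
      rw [sum_fin_ite_val_eq (fun n : ℕ => f ((n : ℤ) + 1)) (by omega) hN]
      push_cast
      rfl
  rw [mulVec, dotProduct, sum_congr rfl fun j _ => hterm j, ← mul_sum, sum_add_distrib,
    sum_add_distrib, sum_fin_ite_val_eq (fun n : ℕ => -2 * f ((n : ℤ) + 1)) i.isLt.le
      (by simp [hN]), sum_fin_ite_val_eq (fun n : ℕ => f ((n : ℤ) + 1)) i.isLt hN, hprev]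
  rw [Nat.cast_succ, add_assoc (i : ℤ), one_add_one_eq_two]
  ring

open Matrix in
lemma resolvent_mulVec (N : ℕ) (z : ℂ) (τ : ℝ) (f : ℤ → ℂ) (h0 : f 0 = 0) (hN : f (N + 1) = 0)
    (i : Fin N) :
    ((z • (1 : Matrix (Fin N) (Fin N) ℂ) - (τ : ℂ) • (lmat N).map Complex.ofReal) *ᵥ
        fun j : Fin N => f ((j : ℤ) + 1)) i =
      resolventStencil z (τ * ((N : ℂ) + 1) ^ 2) f ((i : ℤ) + 1) := by
  rw [sub_mulVec, smul_mulVec, smul_mulVec, one_mulVec, Pi.sub_apply, Pi.smul_apply,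
    Pi.smul_apply, lmat_map_mulVec N f h0 hN, resolventStencil_apply, add_sub_cancel_right,
    add_assoc, one_add_one_eq_two, smul_eq_mul, smul_eq_mul]
  ring

open Matrix in
lemma resolvent_mul_dirichletGreen (N : ℕ) {z l κ : ℂ} {τ : ℝ}
    (hκ : (τ : ℂ) * ((N : ℂ) + 1) ^ 2 = κ) (hl : l ≠ 0) (hroot : z * l = κ * (1 - l) ^ 2)
    (hW : (z + 2 * κ * (1 - l)) * (1 - l ^ (2 * (N + 1))) ≠ 0) :
    (z • (1 : Matrix (Fin N) (Fin N) ℂ) - (τ : ℂ) • (lmat N).map Complex.ofReal) *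
      Matrix.of (fun i k : Fin N => dirichletGreen z κ l (N + 1) ((k : ℤ) + 1) ((i : ℤ) + 1)) =
        1 := by
  subst hκ
  ext i k
  have hbdry := dirichletGreen_apply_boundary (z := z) (κ := τ * ((N : ℂ) + 1) ^ 2) hl
    (show (k : ℤ) + 1 ≤ ((N + 1 : ℕ) : ℤ) by omega)
  push_cast at hbdry
  calc _ = ((z • (1 : Matrix (Fin N) (Fin N) ℂ) - (τ : ℂ) • (lmat N).map Complex.ofReal) *ᵥ
          fun j : Fin N => dirichletGreen z (τ * ((N : ℂ) + 1) ^ 2) l (N + 1) ((k : ℤ) + 1)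
            ((j : ℤ) + 1)) i := rfl
    _ = _ := by
      rw [resolvent_mulVec N z τ _ (dirichletGreen_apply_zero (by omega)) hbdry,
        resolventStencil_dirichletGreen hl hroot hW, Matrix.one_apply]
      simp [Fin.ext_iff]

-- `i` and `k` are 0-based: the grid points are `i + 1` and `k + 1`.
lemma sum_abs_sub_add_le_sum_Ico {N : ℕ} (P : ℤ → ℝ) (hP : ∀ e, 0 ≤ P e)
    (hsymm : ∀ e, P ((2 * (N + 1) : ℕ) - e) = P e) (i : Fin N) :
    ∑ k : Fin N, (P |(i : ℤ) - k| + P ((i : ℤ) + k + 2)) ≤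
      ∑ e ∈ Ico (0 : ℤ) (2 * (N + 1) : ℕ), P e := by
  set φ : Fin N ⊕ Fin N → ℤ := Sum.elim
    (fun k => if (k : ℤ) ≤ i then (i : ℤ) - k else (2 * (N + 1) : ℕ) + i - k)
    (fun k => (i : ℤ) + k + 2) with hφ
  have hφP : ∀ k : Fin N, P |(i : ℤ) - k| = P (φ (Sum.inl k)) := by
    intro k
    simp only [hφ, Sum.elim_inl]
    split_ifs with h
    · rw [abs_of_nonneg (by omega)]
    · rw [abs_of_neg (by omega), ← hsymm]
      congr 1
      ring
  have hinj : Set.InjOn φ (univ : Finset (Fin N ⊕ Fin N)) := by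
    rintro (a | a) - (b | b) - h <;> simp only [hφ, Sum.elim_inl, Sum.elim_inr] at h
    all_goals (have := a.isLt; have := b.isLt; have := i.isLt)
    · split_ifs at h <;> (congr 1; ext; omega)
    · split_ifs at h <;> omega
    · split_ifs at h <;> omega
    · congr 1; ext; omega
  have hsub : univ.image φ ⊆ Ico (0 : ℤ) (2 * (N + 1) : ℕ) := by
    intro e he
    obtain ⟨a | a, -, rfl⟩ := mem_image.1 he <;> simp only [hφ, Sum.elim_inl, Sum.elim_inr, mem_Ico]
    all_goals (have := a.isLt; have := i.isLt)
    · split_ifs <;> omega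
    · omega
  calc ∑ k : Fin N, (P |(i : ℤ) - k| + P ((i : ℤ) + k + 2))
      = ∑ a : Fin N ⊕ Fin N, P (φ a) := by
        simp only [Fintype.sum_sum_type, hφP, sum_add_distrib]
        rfl
    _ = ∑ e ∈ univ.image φ, P e := (sum_image hinj).symm
    _ ≤ ∑ e ∈ Ico (0 : ℤ) (2 * (N + 1) : ℕ), P e :=
        sum_le_sum_of_subset_of_nonneg hsub fun e _ _ => hP e

lemma sub_mul_sum_Ico_zpow_add_zpow (ρ : ℝ) (n : ℕ) :
    (1 - ρ) * ∑ e ∈ Ico (0 : ℤ) n, (ρ ^ e + ρ ^ ((n : ℤ) - e)) = (1 + ρ) * (1 - ρ ^ n) := by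
  rw [Int.Ico_eq_finset_map, sum_map]
  simp only [sub_zero, Int.toNat_natCast, Function.Embedding.trans_apply, Nat.castEmbedding_apply,
    addLeftEmbedding_apply, zero_add, zpow_natCast]
  have hrefl : ∑ x ∈ range n, ρ ^ ((n : ℤ) - x) = ρ * ∑ x ∈ range n, ρ ^ x := by
    rw [mul_sum, ← sum_range_reflect]
    refine sum_congr rfl fun x hx => ?_
    rw [← pow_succ', ← zpow_natCast]
    congr 1
    have := mem_range.1 hx
    omega
  rw [sum_add_distrib, hrefl]
  have := geom_sum_mul ρ n
  linear_combination -(1 + ρ) * this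

lemma norm_dirichletGreen_mul_le {z κ l : ℂ} {M : ℕ} (hl : l ≠ 0) (K I : ℤ) :
    ‖dirichletGreen z κ l M K I‖ * ‖(z + 2 * κ * (1 - l)) * (1 - l ^ (2 * M))‖ ≤
      (‖l‖ ^ |I - K| + ‖l‖ ^ ((2 * M : ℕ) - |I - K|)) +
        (‖l‖ ^ (I + K) + ‖l‖ ^ ((2 * M : ℕ) - (I + K))) := by
  have hρ : ‖l‖ ≠ 0 := norm_ne_zero_iff.2 hl
  have hnum : ‖imageKernel l K I + l ^ (2 * M) * imageKernel l⁻¹ K I‖ ≤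
      (‖l‖ ^ |I - K| + ‖l‖ ^ ((2 * M : ℕ) - |I - K|)) +
        (‖l‖ ^ (I + K) + ‖l‖ ^ ((2 * M : ℕ) - (I + K))) := by
    calc _ ≤ ‖imageKernel l K I‖ + ‖l ^ (2 * M)‖ * ‖imageKernel l⁻¹ K I‖ :=
          (norm_add_le _ _).trans_eq (by rw [norm_mul])
      _ ≤ (‖l‖ ^ |I - K| + ‖l‖ ^ (I + K)) +
            ‖l‖ ^ (2 * M) * (‖l‖ ^ (-|I - K|) + ‖l‖ ^ (-(I + K))) := by
          simp only [imageKernel, norm_pow, inv_zpow', ← norm_zpow]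
          gcongr <;> exact norm_sub_le _ _
      _ = _ := by
          rw [mul_add, ← zpow_natCast, ← zpow_add₀ hρ, ← zpow_add₀ hρ]
          ring_nf
  by_cases hW : (z + 2 * κ * (1 - l)) * (1 - l ^ (2 * M)) = 0
  · rw [hW, norm_zero, mul_zero]
    positivity
  · calc _ = ‖imageKernel l K I + l ^ (2 * M) * imageKernel l⁻¹ K I‖ := by
          rw [dirichletGreen, Pi.smul_apply, Pi.add_apply, Pi.smul_apply, smul_eq_mul, smul_eq_mul,
            norm_mul, norm_inv, mul_right_comm, inv_mul_cancel₀ (norm_ne_zero_iff.2 hW), one_mul]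
      _ ≤ _ := hnum

lemma sum_norm_dirichletGreen_le {N : ℕ} {z κ l : ℂ} (hl0 : l ≠ 0) (hl1 : ‖l‖ < 1)
    (hd : z + 2 * κ * (1 - l) ≠ 0) (i : Fin N) :
    ∑ k : Fin N, ‖dirichletGreen z κ l (N + 1) ((k : ℤ) + 1) ((i : ℤ) + 1)‖ ≤
      (1 + ‖l‖) / ((1 - ‖l‖) * ‖z + 2 * κ * (1 - l)‖) := by
  set ρ := ‖l‖
  set P : ℤ → ℝ := fun e => ρ ^ e + ρ ^ (((2 * (N + 1) : ℕ) : ℤ) - e)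
  have hρ : 0 < ρ := norm_pos_iff.2 hl0
  have hgap : 0 < 1 - ρ ^ (2 * (N + 1)) := sub_pos.2 (pow_lt_one₀ hρ.le hl1 (by omega))
  have hW : ‖z + 2 * κ * (1 - l)‖ * (1 - ρ ^ (2 * (N + 1))) ≤
      ‖(z + 2 * κ * (1 - l)) * (1 - l ^ (2 * (N + 1)))‖ := by
    rw [norm_mul]
    gcongr
    simpa using norm_sub_norm_le (1 : ℂ) (l ^ (2 * (N + 1)))
  have hlow : 0 < ‖z + 2 * κ * (1 - l)‖ * (1 - ρ ^ (2 * (N + 1))) :=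
    mul_pos (norm_pos_iff.2 hd) hgap
  have hsum : 0 ≤ ∑ e ∈ Ico (0 : ℤ) (2 * (N + 1) : ℕ), P e :=
    sum_nonneg fun e _ => by positivity
  calc _ ≤ (∑ e ∈ Ico (0 : ℤ) (2 * (N + 1) : ℕ), P e) /
        ‖(z + 2 * κ * (1 - l)) * (1 - l ^ (2 * (N + 1)))‖ := by
        rw [le_div_iff₀ (hlow.trans_le hW), sum_mul]
        refine (sum_le_sum fun k _ => ?_).trans
          (sum_abs_sub_add_le_sum_Ico P (fun e => by positivity) (fun e => ?_) i)
        · have := norm_dirichletGreen_mul_le (z := z) (κ := κ) (M := N + 1) hl0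
            ((k : ℤ) + 1) ((i : ℤ) + 1)
          rwa [show (i : ℤ) + 1 - (k + 1) = i - k by ring,
            show (i : ℤ) + 1 + (k + 1) = i + k + 2 by ring] at this
        · simp only [P, sub_sub_cancel, add_comm]
    _ ≤ (∑ e ∈ Ico (0 : ℤ) (2 * (N + 1) : ℕ), P e) /
        (‖z + 2 * κ * (1 - l)‖ * (1 - ρ ^ (2 * (N + 1)))) :=
        div_le_div_of_nonneg_left hsum hlow hW
    _ = _ := by
        rw [div_eq_div_iff hlow.ne' (mul_pos (sub_pos.2 hl1) (norm_pos_iff.2 hd)).ne']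
        linear_combination ‖z + 2 * κ * (1 - l)‖ * sub_mul_sum_Ico_zpow_add_zpow ρ (2 * (N + 1))

lemma mul_norm_one_sub_le {z l : ℂ} {κ : ℝ} (hκ : 0 < κ) (hl0 : l ≠ 0) (hl1 : ‖l‖ < 1)
    (hroot : z * l = κ * (1 - l) ^ 2) {c : ℝ} (hc : 0 ≤ c) (hc2 : 2 * c ^ 2 * ‖z‖ = ‖z‖ + z.re) :
    c * (1 + ‖l‖) * ‖1 - l‖ ≤ (1 - ‖l‖) * ‖1 + l‖ := by
  set ρ := ‖l‖
  have hρ : 0 < ρ := norm_pos_iff.2 hl0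
  have hρ2 : ρ ^ 2 = l.re ^ 2 + l.im ^ 2 := by rw [Complex.sq_norm, normSq_apply]; ring
  have hminus : ‖1 - l‖ ^ 2 = (1 - l.re) ^ 2 + l.im ^ 2 := by
    rw [Complex.sq_norm, normSq_apply]; simp only [sub_re, sub_im, one_re, one_im]; ring
  have hplus : ‖1 + l‖ ^ 2 = 1 + 2 * l.re + ρ ^ 2 := by
    rw [Complex.sq_norm, normSq_apply, hρ2]; simp only [add_re, add_im, one_re, one_im]; ring
  have hnorm : ‖z‖ * ρ = κ * ‖1 - l‖ ^ 2 := by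
    rw [← norm_mul, hroot, norm_mul, norm_pow, norm_real, Real.norm_of_nonneg hκ.le]
  have hre : ρ ^ 2 * z.re = κ * (l.re * (1 + ρ ^ 2) - 2 * ρ ^ 2) := by
    have h1 := congrArg re hroot
    have h2 := congrArg im hroot
    simp only [mul_re, mul_im, sub_re, sub_im, one_re, one_im, ofReal_re, ofReal_im, sq] at h1 h2
    linear_combination l.re * h1 + l.im * h2 + (z.re + κ * (2 - l.re)) * hρ2
  have hcos : 2 * ρ * (c ^ 2 * ‖1 - l‖ ^ 2) = (ρ + l.re) * (1 - ρ) ^ 2 := by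
    refine mul_left_cancel₀ hκ.ne' ?_
    linear_combination
      ρ ^ 2 * hc2 + (ρ - 2 * ρ * c ^ 2) * hnorm + hre + ρ * κ * hminus - ρ * κ * hρ2
  have hx : l.re ≤ ρ := re_le_norm l
  rw [← sq_le_sq₀ (by positivity) (mul_nonneg (by linarith) (norm_nonneg _))]
  refine le_of_mul_le_mul_left ?_ (by positivity : 0 < 2 * ρ)
  calc 2 * ρ * (c * (1 + ρ) * ‖1 - l‖) ^ 2 = (1 + ρ) ^ 2 * ((ρ + l.re) * (1 - ρ) ^ 2) := by
        rw [← hcos]; ring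
    _ ≤ 2 * ρ * ((1 - ρ) * ‖1 + l‖) ^ 2 := by
        rw [mul_pow, hplus]
        nlinarith [mul_nonneg (sub_nonneg.2 hx) (pow_nonneg (sub_nonneg.2 hl1.le) 4)]

lemma one_add_norm_div_le {z l : ℂ} {κ : ℝ} (hκ : 0 < κ) (hz : z ≠ 0) (hl0 : l ≠ 0)
    (hl1 : ‖l‖ < 1) (hroot : z * l = κ * (1 - l) ^ 2) {c : ℝ} (hc : 0 < c)
    (hc2 : 2 * c ^ 2 * ‖z‖ = ‖z‖ + z.re) :
    (1 + ‖l‖) / ((1 - ‖l‖) * ‖z + 2 * κ * (1 - l)‖) ≤ 1 / (c * ‖z‖) := by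
  have hjump : ‖z + 2 * κ * (1 - l)‖ * ‖1 - l‖ = ‖z‖ * ‖1 + l‖ := by
    rw [← norm_mul, ← norm_mul]
    congr 1
    linear_combination -2 * hroot
  have hminus : 0 < ‖1 - l‖ := norm_pos_iff.2 fun h => by
    simp [← sub_eq_zero.1 h] at hl1
  have hplus : 0 < ‖1 + l‖ := norm_pos_iff.2 fun h => by
    simp [eq_neg_of_add_eq_zero_right h] at hl1
  have hzpos : 0 < ‖z‖ := norm_pos_iff.2 hz
  have hd : 0 < ‖z + 2 * κ * (1 - l)‖ := by
    refine pos_of_mul_pos_left ?_ hminus.le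
    rw [hjump]; positivity
  rw [div_le_div_iff₀ (mul_pos (sub_pos.2 hl1) hd) (mul_pos hc hzpos), one_mul]
  refine le_of_mul_le_mul_right ?_ hminus
  calc (1 + ‖l‖) * (c * ‖z‖) * ‖1 - l‖ = ‖z‖ * (c * (1 + ‖l‖) * ‖1 - l‖) := by ring
    _ ≤ ‖z‖ * ((1 - ‖l‖) * ‖1 + l‖) :=
        mul_le_mul_of_nonneg_left (mul_norm_one_sub_le hκ hl0 hl1 hroot hc.le hc2) hzpos.le
    _ = (1 - ‖l‖) * ‖z + 2 * κ * (1 - l)‖ * ‖1 - l‖ := by rw [mul_assoc, hjump]; ring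

lemma two_mul_cos_arg_div_two_sq_mul_norm (z : ℂ) :
    2 * Real.cos (arg z / 2) ^ 2 * ‖z‖ = ‖z‖ + z.re := by
  rw [Real.cos_sq, mul_div_cancel₀ _ two_ne_zero, ← norm_mul_cos_arg z]
  ring

theorem isUnit_resolvent_and_matNormC_inv_le (N : ℕ) {τ : ℝ} (hτ : 0 < τ) {z : ℂ}
    (hz : z ∈ slitPlane) :
    IsUnit (z • (1 : Matrix (Fin N) (Fin N) ℂ) - (τ : ℂ) • (lmat N).map Complex.ofReal) ∧
      matNormC (z • (1 : Matrix (Fin N) (Fin N) ℂ) - (τ : ℂ) • (lmat N).map Complex.ofReal)⁻¹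
        ≤ 1 / (Real.cos (arg z / 2) * ‖z‖) := by
  set κ : ℝ := τ * ((N : ℝ) + 1) ^ 2
  have hκ : 0 < κ := by positivity
  have hκC : (κ : ℂ) = τ * ((N : ℂ) + 1) ^ 2 := by simp [κ]
  obtain ⟨l, hl1, hroot⟩ := exists_norm_lt_one_mul_eq hz hκ
  have hl0 : l ≠ 0 := by
    rintro rfl
    exact hκ.ne' (by simpa using hroot.symm)
  have hz0 : z ≠ 0 := slitPlane_ne_zero hz
  have hc : 0 < Real.cos (arg z / 2) := Real.cos_pos_of_mem_Ioo
    ⟨by linarith [neg_pi_lt_arg z], by linarith [(arg_le_pi z).lt_of_ne (slitPlane_arg_ne_pi hz)]⟩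
  have hd : z + 2 * κ * (1 - l) ≠ 0 := by
    intro h
    have : z * (1 + l) = 0 := by linear_combination (1 - l) * h + 2 * hroot
    rcases mul_eq_zero.1 this with h | h
    · exact hz0 h
    · simp [eq_neg_of_add_eq_zero_right h] at hl1
  have hpow : 1 - l ^ (2 * (N + 1)) ≠ 0 := fun h => by
    have := congrArg norm (sub_eq_zero.1 h)
    rw [norm_one, norm_pow] at this
    exact (pow_lt_one₀ (norm_nonneg l) hl1 (by omega)).ne' this
  have hAG := resolvent_mul_dirichletGreen N hκC.symm hl0 hroot (mul_ne_zero hd hpow)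
  refine ⟨⟨⟨_, _, hAG, mul_eq_one_comm.1 hAG⟩, rfl⟩, ?_⟩
  rw [Matrix.inv_eq_right_inv hAG, matNormC]
  refine Real.iSup_le (fun i => ?_) (by positivity)
  exact (sum_norm_dirichletGreen_le hl0 hl1 hd i).trans
    (one_add_norm_div_le hκ hz0 hl0 hl1 hroot hc (two_mul_cos_arg_div_two_sq_mul_norm z))

theorem stmt1_general (N : ℕ) (τ : ℝ) (hτ : 0 < τ) (z : ℂ) (hz0 : z ≠ 0)
    (θ : ℝ) (hθ : |θ| < Real.pi)
    (hz : z = ((‖z‖ : ℝ) : ℂ) * Complex.exp (θ * Complex.I)) :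
    IsUnit (z • (1 : Matrix (Fin N) (Fin N) ℂ) - (τ : ℂ) • (lmat N).map Complex.ofReal) ∧
      matNormC (z • (1 : Matrix (Fin N) (Fin N) ℂ) - (τ : ℂ) • (lmat N).map Complex.ofReal)⁻¹
        ≤ (1 / Real.cos (θ / 2)) / ‖z‖ := by
  have harg : arg z = θ := by
    rw [hz, exp_mul_I]
    exact arg_mul_cos_add_sin_mul_I (norm_pos_iff.2 hz0) ⟨(abs_lt.1 hθ).1, (abs_lt.1 hθ).2.le⟩
  have hslit : z ∈ slitPlane := mem_slitPlane_iff_arg.2 ⟨harg ▸ (abs_lt.1 hθ).2.ne, hz0⟩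
  rw [div_div, ← harg]
  exact isUnit_resolvent_and_matNormC_inv_le N hτ hslit

theorem stmt1 (N : ℕ) (hN : 1 ≤ N) (τ : ℝ) (hτ : 0 < τ) (z : ℂ) (hz0 : z ≠ 0)
    (θ : ℝ) (hθ : |θ| < Real.pi)
    (hz : z = ((‖z‖ : ℝ) : ℂ) * Complex.exp (θ * Complex.I)) :
    IsUnit (z • (1 : Matrix (Fin N) (Fin N) ℂ) - (τ : ℂ) • (lmat N).map Complex.ofReal) ∧
      matNormC (z • (1 : Matrix (Fin N) (Fin N) ℂ) - (τ : ℂ) • (lmat N).map Complex.ofReal)⁻¹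
        ≤ (1 / Real.cos (θ / 2)) / ‖z‖ :=
  stmt1_general N τ hτ z hz0 θ hθ hz
end

section
/- Let N ≥ 1, Δx = 1/(N+1), and let L_N be the N×N matrix (1/Δx²)·tridiag(1,−2,1). For every τ > 0 and every z ∈ ℂ with |z| < 8τ, the matrix zI − τL_N is invertible and ‖(zI − τL_N)⁻¹‖_∞ ≤ 1/(8τ − |z|). -/
open scoped BigOperators

/-!
The matrix `-L_N` is inverted explicitly by the discrete Green's function `G`, whose entries
`Δx · x_min (1 - x_max)` are nonnegative. Hence `‖L_N⁻¹‖_∞` is the largest row sum of `G`, that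
is, the largest entry of `G 1 = -L_N⁻¹ 1`, the discrete torsion function `x (1 - x) / 2 ≤ 1 / 8`.
So `‖(-τ L_N)⁻¹‖_∞ ≤ 1 / (8τ)`, and writing `z I - τ L_N = (-τ L_N)(I - x)` with
`‖x‖_∞ ≤ |z| / (8τ) < 1`, the Neumann series gives `‖(z I - τ L_N)⁻¹‖_∞ ≤ 1 / (8τ - |z|)`.
-/

open Matrix

theorem lmat_mulVec_apply {N : ℕ} (v : ℕ → ℝ) (h₀ : v 0 = 0) (h₁ : v (N + 1) = 0) (i : Fin N) :
    (lmat N *ᵥ fun j => v (j + 1)) i = ((N : ℝ) + 1) ^ 2 * (v i - 2 * v (i + 1) + v (i + 2)) := by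
  set f : ℕ → ℝ := fun m =>
    (if (i : ℕ) = m then v m else 0) - 2 * (if (i : ℕ) + 1 = m then v m else 0) +
      (if (i : ℕ) + 2 = m then v m else 0) with hf
  have hterm (j : Fin N) : lmat N i j * v (j + 1) = ((N : ℝ) + 1) ^ 2 * f (j + 1) := by
    simp only [lmat, of_apply, hf]
    split_ifs <;> first | omega | ring
  -- `f 0 = f (N + 1) = 0`, so the sum may run over all nodes and pick up each Kronecker delta.
  have hshift : ∑ j ∈ Finset.range N, f (j + 1) = ∑ m ∈ Finset.range (N + 2), f m := by
    rw [Finset.sum_range_succ, Finset.sum_range_succ']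
    simp [hf, h₀, h₁]
  simp only [mulVec, dotProduct, hterm, ← Finset.mul_sum]
  rw [Fin.sum_univ_eq_sum_range (fun j => f (j + 1)), hshift]
  simp only [hf, Finset.sum_add_distrib, Finset.sum_sub_distrib, ← Finset.mul_sum,
    Finset.sum_ite_eq, Finset.mem_range]
  simp only [show (i : ℕ) < N + 2 by omega, show (i : ℕ) + 1 < N + 2 by omega,
    show (i : ℕ) + 2 < N + 2 by omega, if_true]

-- `Δx · min(x, y) · (1 - max(x, y))` at the grid points `x = m Δx`, `y = n Δx`.
noncomputable def green (N m n : ℕ) : ℝ :=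
  (min m n : ℕ) * ((N : ℝ) + 1 - (max m n : ℕ)) / ((N : ℝ) + 1) ^ 3

theorem green_zero_left (N n : ℕ) : green N 0 n = 0 := by
  simp [green]

theorem green_succ_left {N n : ℕ} (hn : n ≤ N + 1) : green N (N + 1) n = 0 := by
  simp [green, max_eq_left hn]

theorem green_nonneg {N m n : ℕ} (hm : m ≤ N + 1) (hn : n ≤ N + 1) : 0 ≤ green N m n := by
  have hmax : ((max m n : ℕ) : ℝ) ≤ N + 1 := by exact_mod_cast max_le hm hn
  have := sub_nonneg.2 hmax
  unfold green
  positivity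

theorem green_second_difference (N i n : ℕ) :
    ((N : ℝ) + 1) ^ 2 * (green N i n - 2 * green N (i + 1) n + green N (i + 2) n) =
      -if i + 1 = n then 1 else 0 := by
  have hN : ((N : ℝ) + 1) ≠ 0 := by positivity
  rcases lt_trichotomy (i + 1) n with h | h | h
  · rw [if_neg h.ne]
    simp only [green, min_eq_left (by omega : i ≤ n), min_eq_left (by omega : i + 1 ≤ n),
      min_eq_left (by omega : i + 2 ≤ n), max_eq_right (by omega : i ≤ n),
      max_eq_right (by omega : i + 1 ≤ n), max_eq_right (by omega : i + 2 ≤ n)]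
    field_simp
    push_cast
    ring
  · subst h
    simp only [green, if_true, min_eq_left (by omega : i ≤ i + 1), min_self,
      min_eq_right (by omega : i + 1 ≤ i + 2), max_eq_right (by omega : i ≤ i + 1), max_self,
      max_eq_left (by omega : i + 1 ≤ i + 2)]
    field_simp
    push_cast
    ring
  · rw [if_neg h.ne']
    simp only [green, min_eq_right (by omega : n ≤ i), min_eq_right (by omega : n ≤ i + 1),
      min_eq_right (by omega : n ≤ i + 2), max_eq_left (by omega : n ≤ i),
      max_eq_left (by omega : n ≤ i + 1), max_eq_left (by omega : n ≤ i + 2)]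
    field_simp
    push_cast
    ring

noncomputable def greenMat (N : ℕ) : Matrix (Fin N) (Fin N) ℝ :=
  of fun i k => green N (i + 1) (k + 1)

theorem lmat_mul_greenMat (N : ℕ) : lmat N * greenMat N = -1 := by
  ext i k
  have hk : (k : ℕ) + 1 ≤ N + 1 := by omega
  change (lmat N *ᵥ fun j => green N (j + 1) (k + 1)) i = _
  rw [lmat_mulVec_apply (green N · (k + 1)) (green_zero_left N _) (green_succ_left hk),
    green_second_difference]
  by_cases h : i = k
  · simp [h]
  · simp [h, one_apply_ne h, Fin.val_eq_val]

theorem greenMat_nonneg (N : ℕ) (i k : Fin N) : 0 ≤ greenMat N i k :=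
  green_nonneg (by omega) (by omega)

theorem greenMat_mul_lmat (N : ℕ) : greenMat N * lmat N = -1 := by
  have h : lmat N * -greenMat N = 1 := by rw [Matrix.mul_neg, lmat_mul_greenMat, neg_neg]
  rw [← neg_neg (greenMat N * lmat N), ← Matrix.neg_mul, mul_eq_one_comm.1 h]

-- `x (1 - x) / 2` at `x = m Δx`: the solution of `-u'' = 1`, `u(0) = u(1) = 0`, which the
-- three-point stencil reproduces exactly since `u` is quadratic.
noncomputable def torsion (N m : ℕ) : ℝ :=
  m * ((N : ℝ) + 1 - m) / (2 * ((N : ℝ) + 1) ^ 2)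

theorem torsion_le (N m : ℕ) : torsion N m ≤ 1 / 8 := by
  rw [torsion, div_le_div_iff₀ (by positivity) (by norm_num)]
  nlinarith [sq_nonneg ((N : ℝ) + 1 - 2 * m)]

theorem lmat_mulVec_torsion (N : ℕ) : (lmat N *ᵥ fun j => torsion N (j + 1)) = fun _ => -1 := by
  ext i
  have hN : ((N : ℝ) + 1) ≠ 0 := by positivity
  rw [lmat_mulVec_apply _ (by simp [torsion]) (by simp [torsion])]
  simp only [torsion]
  field_simp
  push_cast
  ring

theorem sum_greenMat_row (N : ℕ) (i : Fin N) : ∑ k, greenMat N i k = torsion N (i + 1) := by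
  have h := congrArg (greenMat N *ᵥ ·) (lmat_mulVec_torsion N)
  simp only [mulVec_mulVec, greenMat_mul_lmat, neg_mulVec, one_mulVec] at h
  have hi := congrFun h i
  simp only [Pi.neg_apply, mulVec, dotProduct, mul_neg_one, Finset.sum_neg_distrib, neg_inj] at hi
  exact hi.symm

theorem Units.isUnit_add_and_norm_inverse_le {R : Type*} [NormedRing R] [NormOneClass R]
    [HasSummableGeomSeries R] (u : Rˣ) {t : R} {c : ℝ} (hu : ‖(↑u⁻¹ : R)‖ ≤ c⁻¹) (ht : ‖t‖ < c) :
    IsUnit (↑u + t) ∧ ‖Ring.inverse (↑u + t)‖ ≤ (c - ‖t‖)⁻¹ := by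
  have hc : 0 < c := (norm_nonneg t).trans_lt ht
  set x : R := -(↑u⁻¹ * t)
  have hx : ‖x‖ ≤ ‖t‖ / c :=
    calc ‖x‖ ≤ ‖(↑u⁻¹ : R)‖ * ‖t‖ := (norm_neg _).trans_le (norm_mul_le _ _)
      _ ≤ c⁻¹ * ‖t‖ := by gcongr
      _ = ‖t‖ / c := by ring
  have hx₁ : ‖x‖ < 1 := hx.trans_lt ((div_lt_one hc).2 ht)
  have hfac : ↑u + t = ↑(u * Units.oneSub x hx₁) := by
    simp [x, mul_add, ← mul_assoc]
  refine ⟨hfac ▸ Units.isUnit _, ?_⟩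
  have hgeom : ‖(↑(Units.oneSub x hx₁)⁻¹ : R)‖ ≤ (1 - ‖x‖)⁻¹ := by
    have h := tsum_geometric_le_of_norm_lt_one x hx₁
    rwa [norm_one, sub_self, zero_add] at h
  rw [hfac, Ring.inverse_unit, _root_.mul_inv_rev, Units.val_mul]
  calc ‖(↑(Units.oneSub x hx₁)⁻¹ * ↑u⁻¹ : R)‖
      ≤ ‖(↑(Units.oneSub x hx₁)⁻¹ : R)‖ * ‖(↑u⁻¹ : R)‖ := norm_mul_le _ _
    _ ≤ (1 - ‖t‖ / c)⁻¹ * c⁻¹ := by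
      have htc : 0 < 1 - ‖t‖ / c := by rw [sub_pos, div_lt_one hc]; exact ht
      gcongr
      exact hgeom.trans (by gcongr)
    _ = (c - ‖t‖)⁻¹ := by
      field_simp

section LinftyOpNorm

attribute [local instance] Matrix.linftyOpNormedAddCommGroup Matrix.linftyOpNormedRing
  Matrix.linftyOpNormedAlgebra

theorem matNormC_le_norm {ι : Type*} [Fintype ι] (A : Matrix ι ι ℂ) : matNormC A ≤ ‖A‖ := by
  refine Real.iSup_le (fun i => ?_) (norm_nonneg A)
  rw [linfty_opNorm_def]
  simpa only [NNReal.coe_sum, coe_nnnorm] using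
    NNReal.coe_le_coe.2 (Finset.le_sup (f := fun i => ∑ j, ‖A i j‖₊) (Finset.mem_univ i))

theorem norm_map_greenMat_le (N : ℕ) : ‖(greenMat N).map Complex.ofReal‖ ≤ 1 / 8 := by
  rw [linfty_opNorm_def, show (1 / 8 : ℝ) = ((1 / 8 : NNReal) : ℝ) by norm_num, NNReal.coe_le_coe]
  refine Finset.sup_le fun i _ => ?_
  rw [← NNReal.coe_le_coe, NNReal.coe_sum]
  have hrow (k : Fin N) : (‖(greenMat N).map Complex.ofReal i k‖₊ : ℝ) = greenMat N i k := by
    rw [coe_nnnorm, map_apply, Complex.norm_real, Real.norm_of_nonneg (greenMat_nonneg N i k)]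
  simp only [hrow, sum_greenMat_row]
  exact_mod_cast torsion_le N (i + 1)

theorem map_lmat_mul_map_greenMat (N : ℕ) :
    (lmat N).map Complex.ofReal * (greenMat N).map Complex.ofReal = -1 := by
  have h : (lmat N * greenMat N).map Complex.ofReal =
      (lmat N).map Complex.ofReal * (greenMat N).map Complex.ofReal :=
    Matrix.map_mul (f := Complex.ofRealHom)
  rw [← h, lmat_mul_greenMat, Matrix.map_neg _ Complex.ofReal_neg,
    Matrix.map_one _ Complex.ofReal_zero Complex.ofReal_one]

theorem exists_unit_eq_neg_smul_lmat (N : ℕ) {τ : ℝ} (hτ : 0 < τ) :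
    ∃ u : (Matrix (Fin N) (Fin N) ℂ)ˣ,
      (u : Matrix (Fin N) (Fin N) ℂ) = -((τ : ℂ) • (lmat N).map Complex.ofReal) ∧
        ‖(↑u⁻¹ : Matrix (Fin N) (Fin N) ℂ)‖ ≤ (8 * τ)⁻¹ := by
  have hτ' : (τ : ℂ) ≠ 0 := by exact_mod_cast hτ.ne'
  have h : -((τ : ℂ) • (lmat N).map Complex.ofReal) * ((τ : ℂ)⁻¹ • (greenMat N).map Complex.ofReal)
      = 1 := by
    rw [neg_mul, smul_mul_smul_comm, map_lmat_mul_map_greenMat, mul_inv_cancel₀ hτ', one_smul,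
      neg_neg]
  refine ⟨⟨_, _, h, mul_eq_one_comm.1 h⟩, rfl, ?_⟩
  calc ‖(τ : ℂ)⁻¹ • (greenMat N).map Complex.ofReal‖
      = τ⁻¹ * ‖(greenMat N).map Complex.ofReal‖ := by
        rw [norm_smul, norm_inv, Complex.norm_real, Real.norm_of_nonneg hτ.le]
    _ ≤ τ⁻¹ * (1 / 8) := by gcongr; exact norm_map_greenMat_le N
    _ = (8 * τ)⁻¹ := by ring

theorem stmt2 (N : ℕ) (hN : 1 ≤ N) (τ : ℝ) (hτ : 0 < τ) (z : ℂ)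
    (hz : ‖z‖ < 8 * τ) :
    IsUnit (z • (1 : Matrix (Fin N) (Fin N) ℂ) - (τ : ℂ) • (lmat N).map Complex.ofReal) ∧
      matNormC (z • (1 : Matrix (Fin N) (Fin N) ℂ) - (τ : ℂ) • (lmat N).map Complex.ofReal)⁻¹
        ≤ 1 / (8 * τ - ‖z‖) := by
  have : Nonempty (Fin N) := ⟨⟨0, hN⟩⟩
  obtain ⟨u, hu, hu_inv⟩ := exists_unit_eq_neg_smul_lmat N hτ
  have hz₁ : ‖z • (1 : Matrix (Fin N) (Fin N) ℂ)‖ = ‖z‖ := by rw [norm_smul, norm_one, mul_one]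
  obtain ⟨hunit, hinv⟩ := u.isUnit_add_and_norm_inverse_le hu_inv (hz₁.trans_lt hz)
  rw [hu, neg_add_eq_sub] at hunit hinv
  rw [hz₁, ← one_div] at hinv
  rw [nonsing_inv_eq_ringInverse]
  exact ⟨hunit, (matNormC_le_norm _).trans hinv⟩

end LinftyOpNorm
end

section
/- Let m ≥ 1, 0 < α ≤ π/4, and let R(z₁,…,z_m) = P/Q be a rational function of m complex variables such that Q has no zeros in W(α)^m and |R(z₁,…,z_m)| ≤ 1 whenever all z_j ∈ W(α). Then for every n ≥ 0 and all nonzero z₁,…,z_m ∈ W(α), one has z₁ + ⋯ + z_m ≠ 0 and |R(z₁,…,z_m)ⁿ / (z₁ + ⋯ + z_m)| ≤ m^{−1/2} · ∏_{j=1}^m |z_j|^{−1/m}. -/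
/-!
Since `α ≤ π/4`, any two points of `W(α)` subtend an angle of at most `π/2` at the origin, so
all the real inner products `⟪z_j, z_k⟫` are nonnegative. Expanding `|∑ z_j|²` therefore gives
`|∑ z_j|² ≥ ∑ |z_j|² ≥ m ∏ |z_j|^{2/m}`, the last step by AM-GM. Together with `|R| ≤ 1` this
bounds `|Rⁿ / ∑ z_j|` by `1 / |∑ z_j|`, which is at most the claimed quantity.
-/

open scoped BigOperators

/-- The sector `W(α) = {z ∈ ℂ : |arg(−z)| ≤ α} ∪ {0}`. -/
def Wsector (α : ℝ) : Set ℂ := {z | z = 0 ∨ |Complex.arg (-z)| ≤ α}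

open scoped RealInnerProductSpace

open Finset

theorem sum_norm_sq_le_norm_sum_sq_of_inner_nonneg {E ι : Type*} [NormedAddCommGroup E]
    [InnerProductSpace ℝ E] (s : Finset ι) (v : ι → E)
    (h : ∀ i ∈ s, ∀ j ∈ s, 0 ≤ ⟪v i, v j⟫) :
    ∑ i ∈ s, ‖v i‖ ^ 2 ≤ ‖∑ i ∈ s, v i‖ ^ 2 := by
  rw [← real_inner_self_eq_norm_sq, sum_inner]
  refine sum_le_sum fun i hi => ?_
  rw [← real_inner_self_eq_norm_sq, inner_sum]
  exact single_le_sum (h i hi) hi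

theorem Real.sqrt_card_mul_geom_mean_le_sqrt_sum_sq {ι : Type*} (s : Finset ι)
    (hs : s.Nonempty) (x : ι → ℝ) (hx : ∀ i ∈ s, 0 ≤ x i) :
    √(#s : ℝ) * (∏ i ∈ s, x i) ^ ((#s : ℝ)⁻¹) ≤ √(∑ i ∈ s, x i ^ 2) := by
  have hcard : (0 : ℝ) < #s := by exact_mod_cast hs.card_pos
  have hprod : 0 ≤ ∏ i ∈ s, x i := prod_nonneg hx
  have amgm := Real.geom_mean_le_arith_mean s (fun _ => 1) (fun i => x i ^ 2)
    (fun _ _ => zero_le_one) (by simpa using hcard) (fun i _ => sq_nonneg (x i))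
  simp only [Real.rpow_one, one_mul, sum_const, nsmul_eq_mul, mul_one, prod_pow] at amgm
  rw [← Real.sqrt_sq (Real.rpow_nonneg hprod _), ← Real.sqrt_mul hcard.le]
  refine Real.sqrt_le_sqrt ?_
  have hswap : ((∏ i ∈ s, x i) ^ 2) ^ ((#s : ℝ)⁻¹) = ((∏ i ∈ s, x i) ^ ((#s : ℝ)⁻¹)) ^ 2 := by
    rw [← Real.rpow_natCast, ← Real.rpow_natCast, ← Real.rpow_mul hprod, ← Real.rpow_mul hprod,
      mul_comm]
  rwa [hswap, le_div_iff₀ hcard, mul_comm] at amgm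

theorem abs_im_le_re_of_abs_arg_le_pi_div_four {w : ℂ} (h : |w.arg| ≤ Real.pi / 4) :
    |w.im| ≤ w.re := by
  rw [← Complex.norm_mul_cos_arg, ← Complex.norm_mul_sin_arg, abs_mul, abs_norm]
  refine mul_le_mul_of_nonneg_left ?_ (norm_nonneg w)
  have hcos : √2 / 2 ≤ Real.cos w.arg := by
    rw [← Real.cos_pi_div_four, ← Real.cos_abs w.arg]
    exact Real.cos_le_cos_of_nonneg_of_le_pi (abs_nonneg _) (by linarith [Real.pi_pos]) h
  have hcos_sq : 1 / 2 ≤ Real.cos w.arg ^ 2 := by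
    nlinarith [Real.sq_sqrt (zero_le_two : (0 : ℝ) ≤ 2), Real.sqrt_nonneg 2]
  refine abs_le_of_sq_le_sq ?_ ((by positivity : (0 : ℝ) ≤ √2 / 2).trans hcos)
  nlinarith [Real.sin_sq_add_cos_sq w.arg]

theorem Complex.inner_nonneg_of_abs_im_le_re {a b : ℂ} (ha : |a.im| ≤ a.re)
    (hb : |b.im| ≤ b.re) : 0 ≤ ⟪a, b⟫ := by
  have hre : |a.im| * |b.im| ≤ a.re * b.re :=
    mul_le_mul ha hb (abs_nonneg _) ((abs_nonneg _).trans ha)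
  have him : -(a.im * b.im) ≤ |a.im| * |b.im| := abs_mul a.im b.im ▸ neg_le_abs _
  rw [Complex.inner, Complex.mul_re, Complex.conj_re, Complex.conj_im]
  linarith

theorem inner_nonneg_of_mem_Wsector {α : ℝ} (hα : α ≤ Real.pi / 4) {z w : ℂ}
    (hz : z ∈ Wsector α) (hw : w ∈ Wsector α) : 0 ≤ ⟪z, w⟫ := by
  have hneg : ∀ u ∈ Wsector α, |(-u).im| ≤ (-u).re := by
    rintro u (rfl | hu)
    · simp
    · exact abs_im_le_re_of_abs_arg_le_pi_div_four (hu.trans hα)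
  simpa using Complex.inner_nonneg_of_abs_im_le_re (hneg z hz) (hneg w hw)

theorem stmt7_general (m : ℕ) (hm : 1 ≤ m) (α : ℝ) (hα : α ≤ Real.pi / 4)
    (P Q : MvPolynomial (Fin m) ℂ)
    (hR : ∀ z : Fin m → ℂ, (∀ j, z j ∈ Wsector α) →
      ‖MvPolynomial.eval z P / MvPolynomial.eval z Q‖ ≤ 1)
    (n : ℕ) (z : Fin m → ℂ) (hz : ∀ j, z j ∈ Wsector α) (hz0 : ∀ j, z j ≠ 0) :
    (∑ j, z j) ≠ 0 ∧
    ‖(MvPolynomial.eval z P / MvPolynomial.eval z Q) ^ n / ∑ j, z j‖ ≤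
      (Real.sqrt m)⁻¹ * ∏ j, ‖z j‖ ^ (-(1 : ℝ) / m) := by
  have hnorm : ∀ j ∈ univ, 0 ≤ ‖z j‖ := fun j _ => norm_nonneg _
  set G := (∏ j, ‖z j‖) ^ ((m : ℝ)⁻¹)
  have hG : 0 < √m * G := mul_pos (Real.sqrt_pos.mpr (Nat.cast_pos.mpr hm))
    (Real.rpow_pos_of_pos (prod_pos fun j _ => norm_pos_iff.mpr (hz0 j)) _)
  have hGS : √m * G ≤ ‖∑ j, z j‖ := by
    have hm' : (univ : Finset (Fin m)).Nonempty := univ_nonempty_iff.mpr ⟨⟨0, hm⟩⟩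
    have hqm_gm := Real.sqrt_card_mul_geom_mean_le_sqrt_sum_sq univ hm' (fun j => ‖z j‖) hnorm
    rw [card_univ, Fintype.card_fin] at hqm_gm
    refine hqm_gm.trans (Real.sqrt_le_iff.mpr ⟨norm_nonneg _, ?_⟩)
    exact sum_norm_sq_le_norm_sum_sq_of_inner_nonneg univ z
      fun j _ k _ => inner_nonneg_of_mem_Wsector hα (hz j) (hz k)
  have hS : 0 < ‖∑ j, z j‖ := hG.trans_le hGS
  refine ⟨norm_pos_iff.mp hS, ?_⟩
  calc ‖(MvPolynomial.eval z P / MvPolynomial.eval z Q) ^ n / ∑ j, z j‖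
      ≤ 1 / ‖∑ j, z j‖ := by
        rw [norm_div, norm_pow]
        gcongr
        exact pow_le_one₀ (norm_nonneg _) (hR z hz)
    _ ≤ 1 / (√m * G) := one_div_le_one_div_of_le hG hGS
    _ = (Real.sqrt m)⁻¹ * ∏ j, ‖z j‖ ^ (-(1 : ℝ) / m) := by
        rw [Real.finsetProd_rpow _ _ hnorm, neg_div, one_div, Real.rpow_neg (prod_nonneg hnorm),
          one_div, mul_inv]

theorem stmt7 (m : ℕ) (hm : 1 ≤ m) (α : ℝ) (hα0 : 0 < α) (hα : α ≤ Real.pi / 4)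
    (P Q : MvPolynomial (Fin m) ℂ)
    (hQ : ∀ z : Fin m → ℂ, (∀ j, z j ∈ Wsector α) → MvPolynomial.eval z Q ≠ 0)
    (hR : ∀ z : Fin m → ℂ, (∀ j, z j ∈ Wsector α) →
      ‖MvPolynomial.eval z P / MvPolynomial.eval z Q‖ ≤ 1)
    (n : ℕ) (z : Fin m → ℂ) (hz : ∀ j, z j ∈ Wsector α) (hz0 : ∀ j, z j ≠ 0) :
    (∑ j, z j) ≠ 0 ∧
    ‖(MvPolynomial.eval z P / MvPolynomial.eval z Q) ^ n / ∑ j, z j‖ ≤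
      (Real.sqrt m)⁻¹ * ∏ j, ‖z j‖ ^ (-(1 : ℝ) / m) :=
  stmt7_general m hm α hα P Q hR n z hz hz0
end

section
/- Let N ≥ 1, Δx = 1/(N+1), L_N = (1/Δx²)·tridiag(1,−2,1), let 0 < α ≤ π/4, τ > 0, and 0 < β̂ ≤ β_j. For every z = −4β̂τ·e^{iθ} with |θ| ≤ α, the matrix zI − τβ_j L_N is invertible and ‖(zI − τβ_j L_N)⁻¹‖_∞ ≤ 1/(4β̂τ). -/
open scoped BigOperators

/-!
The resolvent is controlled by a discrete maximum principle. If `(zI − τβⱼL_N) x = b`, then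
`c = τβⱼ/Δx²` and `Re z ≥ −4β̂τ =: −r` give the pointwise inequality
`c (2|x_i| − |x_{i−1}| − |x_{i+1}|) ≤ ‖b‖ + r‖x‖` with `x₀ = x_{N+1} = 0`.
Comparing `|x_i|` with the parabola `K i (N + 1 − i) / (2c)`, `K = ‖b‖ + r‖x‖`, whose maximum
`K (N + 1)² / (8c)` is at most `K / (2r)` because `c ≥ r (N + 1)² / 4`, yields
`2r‖x‖ ≤ ‖b‖ + r‖x‖`, i.e. `‖x‖ ≤ ‖b‖ / r`. The row-sum norm is the operator norm for the
maximum norm, so this bound is the claim.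
-/

open Matrix

section RowSumNorm

variable {ι : Type*} [Fintype ι]

attribute [local instance] Matrix.linftyOpNormedAddCommGroup in
theorem matNormC_le_of_norm_mulVec_le {B : Matrix ι ι ℂ} {K : ℝ} (hK : 0 ≤ K)
    (h : ∀ v, ‖B *ᵥ v‖ ≤ K * ‖v‖) : matNormC B ≤ K := by
  have hB : ‖B‖ ≤ K := by
    rw [linfty_opNorm_eq_opNorm]
    exact ContinuousLinearMap.opNorm_le_bound _ hK h
  refine Real.iSup_le (fun i => le_trans ?_ hB) hK
  rw [linfty_opNorm_def]
  simp only [← coe_nnnorm, ← NNReal.coe_sum, NNReal.coe_le_coe]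
  exact Finset.le_sup (f := fun i => ∑ j, ‖B i j‖₊) (Finset.mem_univ i)

theorem isUnit_and_matNormC_inv_le [DecidableEq ι] {A : Matrix ι ι ℂ} {K : ℝ} (hK : 0 ≤ K)
    (h : ∀ x, ‖x‖ ≤ K * ‖A *ᵥ x‖) : IsUnit A ∧ matNormC A⁻¹ ≤ K := by
  have hA : IsUnit A := by
    refine mulVec_injective_iff_isUnit.mp fun x y hxy => ?_
    have := h (x - y)
    rw [mulVec_sub, hxy, sub_self, norm_zero, mul_zero] at this
    exact sub_eq_zero.mp (norm_le_zero_iff.mp this)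
  refine ⟨hA, matNormC_le_of_norm_mulVec_le hK fun v => ?_⟩
  simpa [mulVec_mulVec, mul_nonsing_inv A ((isUnit_iff_isUnit_det A).mp hA)] using h (A⁻¹ *ᵥ v)

end RowSumNorm

theorem nonpos_of_discrete_convex {n : ℕ} {f : ℕ → ℝ} (h0 : f 0 ≤ 0) (hn : f (n + 1) ≤ 0)
    (hconv : ∀ i < n, 2 * f (i + 1) ≤ f i + f (i + 2)) : ∀ i ≤ n + 1, f i ≤ 0 := by
  obtain ⟨k₀, hk₀, hmax⟩ := (Finset.range (n + 2)).exists_max_image f ⟨0, by simp⟩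
  have hex : ∃ k, k ≤ n + 1 ∧ f k = f k₀ := ⟨k₀, by simp at hk₀; omega, rfl⟩
  -- convexity forbids the first maximiser of `f` from being an interior point
  obtain ⟨k, ⟨hkn, hk⟩, hmin⟩ : ∃ k, (k ≤ n + 1 ∧ f k = f k₀) ∧
      ∀ m < k, ¬(m ≤ n + 1 ∧ f m = f k₀) :=
    ⟨Nat.find hex, Nat.find_spec hex, fun _ => Nat.find_min hex⟩
  have hle : ∀ i ≤ n + 1, f i ≤ f k := fun i hi => hk ▸ hmax i (by simp; omega)
  suffices f k ≤ 0 from fun i hi => (hle i hi).trans this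
  by_contra! hpos
  obtain ⟨j, rfl⟩ : ∃ j, k = j + 1 :=
    Nat.exists_eq_succ_of_ne_zero (by rintro rfl; linarith)
  have hjn : j < n := by
    by_contra
    obtain rfl : j = n := by omega
    linarith
  have hlt : f j < f (j + 1) :=
    lt_of_le_of_ne (hle j (by omega)) fun h => hmin j (by omega) ⟨by omega, h.trans hk⟩
  linarith [hconv j hjn, hle (j + 2) (by omega)]

theorem norm_second_difference_le {z : ℂ} {r c b : ℝ} (hc : 0 ≤ c) (hz : -r ≤ z.re)
    {x₀ x₁ x₂ : ℂ} (h : ‖z * x₁ - c * (x₀ - 2 * x₁ + x₂)‖ ≤ b) :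
    c * (2 * ‖x₁‖ - ‖x₀‖ - ‖x₂‖) ≤ b + r * ‖x₁‖ := by
  have hlow : 2 * c - r ≤ ‖z + 2 * c‖ := by
    have : (z + 2 * c).re = z.re + 2 * c := by simp
    linarith [Complex.re_le_norm (z + 2 * c)]
  have hsplit : (z + 2 * c) * x₁ = (z * x₁ - c * (x₀ - 2 * x₁ + x₂)) + c * x₀ + c * x₂ := by ring
  have hnorm : ‖z + 2 * c‖ * ‖x₁‖ ≤ b + c * ‖x₀‖ + c * ‖x₂‖ := by
    rw [← norm_mul, hsplit]
    refine (norm_add₃_le ..).trans ?_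
    simp only [norm_mul, Complex.norm_real, Real.norm_of_nonneg hc]
    linarith
  nlinarith [mul_le_mul_of_nonneg_right hlow (norm_nonneg x₁)]

theorem norm_le_of_second_difference_le {n : ℕ} {r c b : ℝ} {z : ℂ} {x : ℕ → ℂ} (hr : 0 < r)
    (hb : 0 ≤ b) (hc : r * (n + 1) ^ 2 / 4 ≤ c) (hz : -r ≤ z.re) (hx₀ : x 0 = 0)
    (hxn : x (n + 1) = 0)
    (hx : ∀ i < n, ‖z * x (i + 1) - c * (x i - 2 * x (i + 1) + x (i + 2))‖ ≤ b) :
    ∀ i ≤ n + 1, ‖x i‖ ≤ b / r := by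
  have hc₀ : 0 < c := lt_of_lt_of_le (by positivity) hc
  obtain ⟨k, hk, hmax⟩ :=
    (Finset.range (n + 2)).exists_max_image (fun i => ‖x i‖) ⟨0, by simp⟩
  set M := ‖x k‖
  set K := b + r * M
  -- quadratic barrier, solving `c (2 v (i+1) - v i - v (i+2)) = K` with zero boundary values
  set v : ℕ → ℝ := fun i => K * i * (n + 1 - i) / (2 * c)
  have hbarrier : ∀ i ≤ n + 1, ‖x i‖ ≤ v i := by
    refine fun i hi => sub_nonpos.mp (nonpos_of_discrete_convex (f := fun i => ‖x i‖ - v i)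
      (by simp [v, hx₀]) (by simp [v, hxn]) (fun i hi => ?_) i hi)
    have h₁ := norm_second_difference_le hc₀.le hz (hx i hi)
    have h₂ : ‖x (i + 1)‖ ≤ M := hmax (i + 1) (by simp; omega)
    have h₃ : c * (2 * v (i + 1) - v i - v (i + 2)) = K := by
      simp only [v]; push_cast; field_simp; ring
    have : c * (2 * (‖x (i + 1)‖ - v (i + 1)) - (‖x i‖ - v i) - (‖x (i + 2)‖ - v (i + 2))) ≤ 0 :=
      by nlinarith
    nlinarith
  have hvk : 2 * r * v k ≤ K := by
    have hK : 0 ≤ K := by positivity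
    have hk : (k : ℝ) * (n + 1 - k) ≤ (n + 1) ^ 2 / 4 := by
      nlinarith [sq_nonneg ((n : ℝ) + 1 - 2 * k)]
    calc 2 * r * v k = K * (r * (k * (n + 1 - k))) / c := by simp only [v]; field_simp
      _ ≤ K * (r * ((n + 1) ^ 2 / 4)) / c := by gcongr
      _ ≤ K * c / c := by gcongr; linarith
      _ = K := by field_simp
  have hM : M ≤ b / r := by
    rw [le_div_iff₀ hr]
    have hk' : k ≤ n + 1 := by simp at hk; omega
    nlinarith [hbarrier k hk']
  exact fun i hi => (hmax i (by simp; omega)).trans hM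

section Padding

variable {N : ℕ}

/-- `x` reindexed by `1, …, N` and extended by zero, so that `0` and `N + 1` are boundary points. -/
noncomputable def pad (x : Fin N → ℂ) : ℕ → ℂ :=
  Function.extend (fun j : Fin N => (j : ℕ) + 1) x 0

theorem pad_succ (x : Fin N → ℂ) (j : Fin N) : pad x (j + 1) = x j :=
  Function.Injective.extend_apply (fun _ _ h => Fin.ext (Nat.succ_injective h)) x 0 j

theorem pad_zero (x : Fin N → ℂ) : pad x 0 = 0 :=
  Function.extend_apply' _ _ _ (by simp)

theorem pad_last (x : Fin N → ℂ) : pad x (N + 1) = 0 :=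
  Function.extend_apply' _ _ _ fun ⟨j, hj⟩ => by omega

theorem sum_ite_succ_eq_pad (x : Fin N → ℂ) (k : ℕ) :
    ∑ j : Fin N, (if (j : ℕ) + 1 = k then x j else 0) = pad x k := by
  by_cases h : ∃ a : Fin N, (a : ℕ) + 1 = k
  · obtain ⟨a, rfl⟩ := h
    simp [Fin.val_inj, pad_succ]
  · rw [pad, Function.extend_apply' _ _ _ h]
    exact Finset.sum_eq_zero fun j _ => if_neg fun hj => h ⟨j, hj⟩

theorem lmat_mulVec (x : Fin N → ℂ) (i : Fin N) :
    ((lmat N).map Complex.ofReal *ᵥ x) i =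
      ((N : ℂ) + 1) ^ 2 * (pad x i - 2 * pad x (i + 1) + pad x (i + 2)) := by
  have hentry : ∀ j : Fin N,
      ((if (i : ℕ) = j then -2 else if (i : ℕ) + 1 = j ∨ (j : ℕ) + 1 = i then 1 else 0 : ℝ) : ℂ) *
          x j =
        (if (j : ℕ) + 1 = i then x j else 0) - 2 * (if (j : ℕ) + 1 = i + 1 then x j else 0) +
          (if (j : ℕ) + 1 = i + 2 then x j else 0) := by
    intro j
    split_ifs <;> first | omega | push_cast; ring
  simp only [mulVec, dotProduct, map_apply, lmat, of_apply, Complex.ofReal_mul, mul_assoc]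
  simp only [hentry, ← Finset.mul_sum, Finset.sum_add_distrib, Finset.sum_sub_distrib,
    sum_ite_succ_eq_pad]
  norm_cast

end Padding

theorem norm_le_norm_smul_one_sub_lmat_mulVec_div {N : ℕ} {z : ℂ} {r c : ℝ} (hr : 0 < r)
    (hc : r / 4 ≤ c) (hz : -r ≤ z.re) (x : Fin N → ℂ) :
    ‖x‖ ≤
      ‖(z • (1 : Matrix (Fin N) (Fin N) ℂ) - (c : ℂ) • (lmat N).map Complex.ofReal) *ᵥ x‖ / r := by
  set A := z • (1 : Matrix (Fin N) (Fin N) ℂ) - (c : ℂ) • (lmat N).map Complex.ofReal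
  have hA : ∀ i : Fin N, (A *ᵥ x) i = z * pad x (i + 1) -
      ((c * (N + 1) ^ 2 : ℝ) : ℂ) * (pad x i - 2 * pad x (i + 1) + pad x (i + 2)) := by
    intro i
    simp only [A, sub_mulVec, smul_mulVec, one_mulVec, Pi.sub_apply, Pi.smul_apply, smul_eq_mul,
      lmat_mulVec, pad_succ]
    push_cast
    ring
  have hpad := norm_le_of_second_difference_le (n := N) (c := c * (N + 1) ^ 2) hr
    (norm_nonneg (A *ᵥ x)) (by nlinarith [sq_nonneg ((N : ℝ) + 1)]) hz (pad_zero x) (pad_last x)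
    fun i hi => by simpa only [hA ⟨i, hi⟩] using norm_le_pi_norm (A *ᵥ x) ⟨i, hi⟩
  exact (pi_norm_le_iff_of_nonneg (by positivity)).mpr fun j => pad_succ x j ▸ hpad _ (by omega)

theorem stmt8_general (N : ℕ) (τ βhat βj : ℝ)
    (hτ : 0 < τ)
    (hβhat : 0 < βhat) (hβ : βhat ≤ βj)
    (θ : ℝ) (z : ℂ)
    (hz : z = -(((4 * βhat * τ : ℝ) : ℂ) * Complex.exp (↑θ * Complex.I))) :
    IsUnit (z • (1 : Matrix (Fin N) (Fin N) ℂ) -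
        ((τ * βj : ℝ) : ℂ) • (lmat N).map Complex.ofReal) ∧
      matNormC (z • (1 : Matrix (Fin N) (Fin N) ℂ) -
          ((τ * βj : ℝ) : ℂ) • (lmat N).map Complex.ofReal)⁻¹
        ≤ 1 / (4 * βhat * τ) := by
  have hr : 0 < 4 * βhat * τ := by positivity
  have hzre : -(4 * βhat * τ) ≤ z.re := by
    rw [hz, Complex.neg_re, Complex.re_ofReal_mul, Complex.exp_ofReal_mul_I_re]
    nlinarith [Real.cos_le_one θ]
  refine isUnit_and_matNormC_inv_le (by positivity) fun x => ?_
  rw [one_div_mul_eq_div]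
  exact norm_le_norm_smul_one_sub_lmat_mulVec_div hr (by nlinarith) hzre x

theorem stmt8 (N : ℕ) (hN : 1 ≤ N) (α τ βhat βj : ℝ)
    (hα0 : 0 < α) (hα : α ≤ Real.pi / 4) (hτ : 0 < τ)
    (hβhat : 0 < βhat) (hβ : βhat ≤ βj)
    (θ : ℝ) (hθ : |θ| ≤ α) (z : ℂ)
    (hz : z = -(((4 * βhat * τ : ℝ) : ℂ) * Complex.exp (↑θ * Complex.I))) :
    IsUnit (z • (1 : Matrix (Fin N) (Fin N) ℂ) -
        ((τ * βj : ℝ) : ℂ) • (lmat N).map Complex.ofReal) ∧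
      matNormC (z • (1 : Matrix (Fin N) (Fin N) ℂ) -
          ((τ * βj : ℝ) : ℂ) • (lmat N).map Complex.ofReal)⁻¹
        ≤ 1 / (4 * βhat * τ) :=
  stmt8_general N τ βhat βj hτ hβhat hβ θ z hz
end

section
/- Let N ≥ 1, Δx = 1/(N+1), L_N = (1/Δx²)·tridiag(1,−2,1), let 0 < α ≤ π/4, τ > 0 and β > 0. For every z = −ρ·e^{±iα} with ρ > 0, the matrix zI − τβL_N is invertible and ‖(zI − τβL_N)⁻¹‖_∞ ≤ 1/(ρ·sin(α/2)). -/
open scoped BigOperators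

/-!
Write `c = τβ(N+1)²`, so that `z - τβ L_N = tridiag(-c, z + 2c, -c)`. Since `z` is not real, the
roots `μ, μ⁻¹` of `c X² - (z + 2c) X + c` are off the unit circle; take `‖μ‖ < 1`. With
`φ k = μ⁻ᵏ - μᵏ`, which solves the three-term recurrence and vanishes at `0`, the inverse is the
discrete Green's function `φ (min a b) φ (N + 1 - max a b) / (c φ 1 φ (N + 1))`. Bounding
`‖φ k‖ ≤ ‖μ‖⁻ᵏ + ‖μ‖ᵏ` and summing geometric series bounds every row sum by
`(1 + ‖μ‖) / ((1 - ‖μ‖) c ‖μ⁻¹ - μ‖)`. Finally `c (1 - μ)² = z μ` turns this into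
`1 / (‖z‖ cos (arg z / 2))`: after squaring, the comparison reduces to `Re μ ≤ ‖μ‖`.
-/

open Finset Matrix ComplexConjugate

section Tridiagonal

variable {K : Type*} [Field K]

def tridiagToeplitz (N : ℕ) (d e : K) : Matrix (Fin N) (Fin N) K :=
  Matrix.of fun i j =>
    if (i : ℕ) = j then d else if (i : ℕ) + 1 = j ∨ (j : ℕ) + 1 = i then e else 0

theorem tridiagToeplitz_mulVec_apply {N : ℕ} (d e : K) (v : ℕ → K) (hv0 : v 0 = 0)
    (hvN : v (N + 1) = 0) (i : Fin N) :
    (tridiagToeplitz N d e *ᵥ fun j => v (j + 1)) i =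
      e * v i + d * v (i + 1) + e * v (i + 2) := by
  obtain ⟨i, hi⟩ := i
  have hentry : ∀ k : ℕ, (if i = k then d else if i + 1 = k ∨ k + 1 = i then e else 0) *
      v (k + 1) = (if k + 1 = i then e * v i else 0) + (if i = k then d * v (i + 1) else 0) +
        (if i + 1 = k then e * v (i + 2) else 0) := by
    intro k
    split_ifs <;> first | omega | (subst_vars; ring)
  simp only [mulVec, dotProduct, tridiagToeplitz, of_apply]
  rw [Fin.sum_univ_eq_sum_range (fun k => (if i = k then d else
    if i + 1 = k ∨ k + 1 = i then e else 0) * v (k + 1)) N]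
  simp only [hentry, sum_add_distrib, sum_ite_eq, mem_range, hi, if_true]
  have hlow : (∑ k ∈ range N, if k + 1 = i then e * v i else 0) = e * v i := by
    rcases i with _ | i
    · simp [hv0]
    · simp only [Nat.add_right_cancel_iff, sum_ite_eq', mem_range]
      rw [if_pos (by omega)]
  have hup : (if i + 1 < N then e * v (i + 2) else 0) = e * v (i + 2) := by
    split_ifs with h
    · rfl
    · rw [show i + 2 = N + 1 by omega, hvN, mul_zero]
  rw [hlow, hup]

end Tridiagonal

theorem smul_one_sub_smul_lmat (N : ℕ) (z : ℂ) (t : ℝ) :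
    z • (1 : Matrix (Fin N) (Fin N) ℂ) - (t : ℂ) • (lmat N).map Complex.ofReal =
      tridiagToeplitz N (z + 2 * ((t * ((N : ℝ) + 1) ^ 2 : ℝ) : ℂ))
        (-((t * ((N : ℝ) + 1) ^ 2 : ℝ) : ℂ)) := by
  ext i j
  simp only [Matrix.sub_apply, Matrix.smul_apply, one_apply, map_apply, lmat, tridiagToeplitz,
    of_apply, smul_eq_mul, Fin.ext_iff]
  split_ifs <;> push_cast <;> ring

section Green

variable {K : Type*} [Field K]

/-- `φ (N + 1 - ·)` is the solution of the recurrence vanishing at `N + 1`, and the denominator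
is the Wronskian of the two solutions (`wronskian_eq_of_recurrence`). -/
def greenFun (N : ℕ) (c : K) (φ : ℕ → K) (a b : ℕ) : K :=
  φ (min a b) * φ (N + 1 - max a b) / (c * φ 1 * φ (N + 1))

variable {c d : K} {φ : ℕ → K}

theorem wronskian_eq_of_recurrence (hφ0 : φ 0 = 0)
    (hrec : ∀ n, c * φ n + c * φ (n + 2) = d * φ (n + 1)) (a k : ℕ) :
    c * (φ (a + 1) * φ (k + 1) - φ a * φ k) = c * φ 1 * φ (a + k + 1) := by
  induction a generalizing k with
  | zero => rw [hφ0]; ring_nf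
  | succ a ih =>
    rw [show a + 1 + k + 1 = a + (k + 1) + 1 by ring, ← ih (k + 1)]
    linear_combination φ (k + 1) * hrec a - φ (a + 1) * hrec k

theorem greenFun_recurrence {N : ℕ} (hφ0 : φ 0 = 0)
    (hrec : ∀ n, c * φ n + c * φ (n + 2) = d * φ (n + 1)) (hW : c * φ 1 * φ (N + 1) ≠ 0)
    {a : ℕ} (ha : a + 1 ≤ N) (b : ℕ) :
    d * greenFun N c φ (a + 1) b - c * greenFun N c φ a b - c * greenFun N c φ (a + 2) b =
      if a + 1 = b then 1 else 0 := by
  obtain ⟨j, rfl⟩ : ∃ j, N = a + 1 + j := ⟨N - (a + 1), by omega⟩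
  rcases lt_trichotomy (a + 1) b with hab | rfl | hba
  · obtain ⟨k, rfl⟩ : ∃ k, b = a + 2 + k := ⟨b - (a + 2), by omega⟩
    simp (disch := omega) only [greenFun, min_eq_left, max_eq_right]
    rw [if_neg (by omega)]
    linear_combination
      (-φ (a + 1 + j + 1 - (a + 2 + k)) / (c * φ 1 * φ (a + 1 + j + 1))) * hrec a
  · simp (disch := omega) only [greenFun, min_eq_left, min_eq_right, max_eq_left, max_eq_right,
      if_true]
    rw [show a + 1 + j + 1 - (a + 1) = j + 1 by omega, show a + 1 + j + 1 - (a + 2) = j by omega]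
    have hwr := wronskian_eq_of_recurrence hφ0 hrec (a + 1) j
    linear_combination (-φ (j + 1) / (c * φ 1 * φ (a + 1 + j + 1))) * hrec a
      + (1 / (c * φ 1 * φ (a + 1 + j + 1))) * hwr + mul_inv_cancel₀ hW
  · simp (disch := omega) only [greenFun, min_eq_right, max_eq_left]
    rw [if_neg (by omega), show a + 1 + j + 1 - a = j + 2 by omega,
      show a + 1 + j + 1 - (a + 1) = j + 1 by omega, show a + 1 + j + 1 - (a + 2) = j by omega]
    linear_combination (-φ b / (c * φ 1 * φ (a + 1 + j + 1))) * hrec j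

theorem tridiagToeplitz_mul_greenFun {N : ℕ} (hφ0 : φ 0 = 0)
    (hrec : ∀ n, c * φ n + c * φ (n + 2) = d * φ (n + 1)) (hW : c * φ 1 * φ (N + 1) ≠ 0) :
    tridiagToeplitz N d (-c) * Matrix.of (fun i j : Fin N => greenFun N c φ (i + 1) (j + 1)) =
      1 := by
  ext i j
  have hcol := tridiagToeplitz_mulVec_apply d (-c) (fun a => greenFun N c φ a (j + 1))
    (by simp [greenFun, hφ0]) (by simp [greenFun, hφ0]) i
  have hδ : (1 : Matrix (Fin N) (Fin N) K) i j = if (i : ℕ) + 1 = j + 1 then 1 else 0 := by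
    simp [one_apply, Fin.ext_iff]
  rw [hδ, ← greenFun_recurrence hφ0 hrec hW (by omega) (j + 1)]
  exact hcol.trans (by ring)

end Green

theorem inv_pow_sub_pow_pos {m : ℝ} (hm0 : 0 < m) (hm1 : m < 1) {k : ℕ} (hk : k ≠ 0) :
    0 < m⁻¹ ^ k - m ^ k := by
  have h1 : m ^ k < 1 := pow_lt_one₀ hm0.le hm1 hk
  have h2 : 1 < m⁻¹ ^ k := one_lt_pow₀ (one_lt_inv₀ hm0 |>.mpr hm1) hk
  linarith

theorem one_sub_mul_sum_range_inv_pow_add_pow {m : ℝ} (hm : m ≠ 0) (n : ℕ) :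
    (1 - m) * ∑ b ∈ range n, (m⁻¹ ^ (b + 1) + m ^ (b + 1)) =
      m⁻¹ ^ n - 1 + m - m ^ (n + 1) := by
  induction n with
  | zero => simp
  | succ n ih =>
    rw [sum_range_succ, mul_add, ih]
    linear_combination (-m⁻¹ ^ n) * mul_inv_cancel₀ hm

theorem sum_range_green_weight_le {m : ℝ} (hm0 : 0 < m) (hm1 : m < 1) {a N : ℕ}
    (haN : a ≤ N) :
    (1 - m) * ∑ b ∈ range N, (m⁻¹ ^ min a (b + 1) + m ^ min a (b + 1)) *
        (m⁻¹ ^ (N + 1 - max a (b + 1)) + m ^ (N + 1 - max a (b + 1))) ≤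
      (1 + m) * (m⁻¹ ^ (N + 1) - m ^ (N + 1)) := by
  obtain ⟨k, rfl⟩ : ∃ k, N = a + k := ⟨N - a, by omega⟩
  have hlow : ∀ b ∈ range a, (m⁻¹ ^ min a (b + 1) + m ^ min a (b + 1)) *
      (m⁻¹ ^ (a + k + 1 - max a (b + 1)) + m ^ (a + k + 1 - max a (b + 1))) =
      (m⁻¹ ^ (k + 1) + m ^ (k + 1)) * (m⁻¹ ^ (b + 1) + m ^ (b + 1)) := by
    intro b hb
    rw [mem_range] at hb
    rw [min_eq_right (by omega), max_eq_left (by omega), show a + k + 1 - a = k + 1 by omega]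
    ring
  have hup : ∀ b ∈ range k, (m⁻¹ ^ min a (a + b + 1) + m ^ min a (a + b + 1)) *
      (m⁻¹ ^ (a + k + 1 - max a (a + b + 1)) + m ^ (a + k + 1 - max a (a + b + 1))) =
      (m⁻¹ ^ a + m ^ a) * (m⁻¹ ^ (k - 1 - b + 1) + m ^ (k - 1 - b + 1)) := by
    intro b hb
    rw [mem_range] at hb
    rw [min_eq_left (by omega), max_eq_right (by omega),
      show a + k + 1 - (a + b + 1) = k - 1 - b + 1 by omega]
  rw [sum_range_add, sum_congr rfl hlow, sum_congr rfl hup, ← mul_sum, ← mul_sum,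
    sum_range_reflect (fun b => m⁻¹ ^ (b + 1) + m ^ (b + 1)) k, mul_add, mul_left_comm,
    one_sub_mul_sum_range_inv_pow_add_pow hm0.ne', mul_left_comm,
    one_sub_mul_sum_range_inv_pow_add_pow hm0.ne']
  simp only [inv_pow, pow_succ, pow_add]
  have hslack : (1 + m) * ((m ^ a)⁻¹ * (m ^ k)⁻¹ * m⁻¹ - m ^ a * m ^ k * m) -
      ((m ^ k)⁻¹ * m⁻¹ + m ^ k * m) * ((m ^ a)⁻¹ - 1 + m - m ^ a * m) -
      ((m ^ a)⁻¹ + m ^ a) * ((m ^ k)⁻¹ - 1 + m - m ^ k * m) =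
      (1 - m) * (m ^ a + m ^ k * m) * (1 + m ^ a * m ^ k * m) / (m ^ a * m ^ k * m) := by
    field_simp
    ring
  have hm : 0 ≤ 1 - m := by linarith
  have : 0 ≤ (1 - m) * (m ^ a + m ^ k * m) * (1 + m ^ a * m ^ k * m) / (m ^ a * m ^ k * m) := by
    positivity
  linarith

section InvPowSubPow

variable {K : Type*} [NormedField K]

def invPowSubPow (μ : K) (k : ℕ) : K := μ⁻¹ ^ k - μ ^ k

theorem invPowSubPow_recurrence {μ : K} (hμ : μ ≠ 0) (c : K) (n : ℕ) :
    c * invPowSubPow μ n + c * invPowSubPow μ (n + 2) =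
      c * (μ + μ⁻¹) * invPowSubPow μ (n + 1) := by
  simp only [invPowSubPow]
  linear_combination (-c * (μ⁻¹ ^ n - μ ^ n)) * mul_inv_cancel₀ hμ

theorem norm_invPowSubPow_le (μ : K) (k : ℕ) : ‖invPowSubPow μ k‖ ≤ ‖μ‖⁻¹ ^ k + ‖μ‖ ^ k := by
  simpa [invPowSubPow] using norm_sub_le (μ⁻¹ ^ k) (μ ^ k)

theorem sub_le_norm_invPowSubPow (μ : K) (k : ℕ) :
    ‖μ‖⁻¹ ^ k - ‖μ‖ ^ k ≤ ‖invPowSubPow μ k‖ := by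
  simpa [invPowSubPow] using norm_sub_norm_le (μ⁻¹ ^ k) (μ ^ k)

theorem norm_invPowSubPow_pos {μ : K} (hμ0 : μ ≠ 0) (hμ1 : ‖μ‖ < 1) {k : ℕ} (hk : k ≠ 0) :
    0 < ‖invPowSubPow μ k‖ :=
  (inv_pow_sub_pow_pos (norm_pos_iff.mpr hμ0) hμ1 hk).trans_le (sub_le_norm_invPowSubPow μ k)

theorem sum_range_norm_greenFun_le {μ c : K} (hμ0 : μ ≠ 0) (hμ1 : ‖μ‖ < 1) (hc : c ≠ 0)
    {a N : ℕ} (haN : a ≤ N) :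
    ∑ b ∈ range N, ‖greenFun N c (invPowSubPow μ) a (b + 1)‖ ≤
      (1 + ‖μ‖) / ((1 - ‖μ‖) * ‖c‖ * ‖invPowSubPow μ 1‖) := by
  set m := ‖μ‖
  have hm0 : 0 < m := norm_pos_iff.mpr hμ0
  set D := m⁻¹ ^ (N + 1) - m ^ (N + 1)
  have hD : 0 < D := inv_pow_sub_pow_pos hm0 hμ1 N.succ_ne_zero
  have hφ1 := norm_invPowSubPow_pos hμ0 hμ1 one_ne_zero
  have hW : ‖c‖ * ‖invPowSubPow μ 1‖ * D ≤
      ‖c * invPowSubPow μ 1 * invPowSubPow μ (N + 1)‖ := by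
    rw [norm_mul, norm_mul]
    gcongr
    exact sub_le_norm_invPowSubPow μ (N + 1)
  have hW0 : 0 < ‖c‖ * ‖invPowSubPow μ 1‖ * D := by
    have := norm_pos_iff.mpr hc
    positivity
  calc ∑ b ∈ range N, ‖greenFun N c (invPowSubPow μ) a (b + 1)‖
      ≤ ∑ b ∈ range N, (m⁻¹ ^ min a (b + 1) + m ^ min a (b + 1)) *
          (m⁻¹ ^ (N + 1 - max a (b + 1)) + m ^ (N + 1 - max a (b + 1))) /
          (‖c‖ * ‖invPowSubPow μ 1‖ * D) := by
        refine sum_le_sum fun b _ => ?_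
        rw [greenFun, norm_div, norm_mul]
        exact div_le_div₀ (by positivity)
          (mul_le_mul (norm_invPowSubPow_le μ _) (norm_invPowSubPow_le μ _) (norm_nonneg _)
            (by positivity)) hW0 hW
    _ ≤ (1 + m) * D / (1 - m) / (‖c‖ * ‖invPowSubPow μ 1‖ * D) := by
        rw [← sum_div]
        gcongr
        rw [le_div_iff₀ (by linarith), mul_comm]
        exact sum_range_green_weight_le hm0 hμ1 haN
    _ = (1 + m) / ((1 - m) * ‖c‖ * ‖invPowSubPow μ 1‖) := by
        field_simp

end InvPowSubPow

theorem norm_one_sub_sq {c : ℝ} (hc : 0 ≤ c) {z μ : ℂ} (h : (c : ℂ) * (1 - μ) ^ 2 = z * μ) :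
    c * ‖1 - μ‖ ^ 2 = ‖μ‖ * ‖z‖ := by
  have := congrArg norm h
  rwa [norm_mul, norm_mul, norm_pow, Complex.norm_real, Real.norm_of_nonneg hc,
    mul_comm ‖z‖] at this

theorem mul_one_sub_norm_sq_mul_re_add_norm {c : ℝ} (hc : 0 ≤ c) {z μ : ℂ}
    (h : (c : ℂ) * (1 - μ) ^ 2 = z * μ) :
    c * (1 - ‖μ‖) ^ 2 * (μ.re + ‖μ‖) = ‖μ‖ ^ 2 * (‖z‖ + z.re) := by
  have hconj : μ * conj μ = ((‖μ‖ ^ 2 : ℝ) : ℂ) := by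
    rw [Complex.mul_conj, Complex.normSq_eq_norm_sq]
  have hre := congrArg Complex.re
    (show (c : ℂ) * ((1 - μ) ^ 2 * conj μ) = z * ((‖μ‖ ^ 2 : ℝ) : ℂ) by
      linear_combination conj μ * h + z * hconj)
  have hm : ‖μ‖ ^ 2 = μ.re ^ 2 + μ.im ^ 2 := by
    rw [← Complex.normSq_eq_norm_sq, Complex.normSq_apply]
    ring
  have hnorm := norm_one_sub_sq hc h
  rw [← Complex.normSq_eq_norm_sq, Complex.normSq_apply] at hnorm
  simp only [Complex.mul_re, pow_two, Complex.sub_re, Complex.sub_im, Complex.one_re,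
    Complex.one_im, Complex.conj_re, Complex.conj_im, Complex.mul_im, Complex.ofReal_re,
    Complex.ofReal_im] at hre hnorm
  linear_combination hre + ‖μ‖ * hnorm - (2 - μ.re - ‖μ‖) * c * hm

theorem norm_mul_mul_one_add_norm_le {c : ℝ} (hc : 0 ≤ c) {z μ : ℂ} (hμ0 : μ ≠ 0)
    (hμ1 : ‖μ‖ < 1) (h : (c : ℂ) * (1 - μ) ^ 2 = z * μ) {s : ℝ} (hs : 0 ≤ s)
    (hs2 : 2 * ‖z‖ * s ^ 2 = ‖z‖ + z.re) :
    ‖z‖ * s * (1 + ‖μ‖) ≤ c * (1 - ‖μ‖) * ‖μ⁻¹ - μ‖ := by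
  have hm0 : 0 < ‖μ‖ := norm_pos_iff.mpr hμ0
  have hfac : ‖μ‖ * ‖μ⁻¹ - μ‖ = ‖1 - μ‖ * ‖1 + μ‖ := by
    rw [← norm_mul, ← norm_mul]
    congr 1
    field_simp
    ring
  have hnorm := norm_one_sub_sq hc h
  have hre := mul_one_sub_norm_sq_mul_re_add_norm hc h
  have hplus : ‖1 + μ‖ ^ 2 = 1 + 2 * μ.re + ‖μ‖ ^ 2 := by
    rw [← Complex.normSq_eq_norm_sq, ← Complex.normSq_eq_norm_sq, Complex.normSq_apply,
      Complex.normSq_apply]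
    simp only [Complex.add_re, Complex.add_im, Complex.one_re, Complex.one_im]
    ring
  have hsq : (c * (1 - ‖μ‖) * (‖1 - μ‖ * ‖1 + μ‖)) ^ 2 - (‖z‖ * s * (1 + ‖μ‖) * ‖μ‖) ^ 2 =
      c * ‖z‖ * (1 - ‖μ‖) ^ 4 * (‖μ‖ - μ.re) / 2 := by
    linear_combination c * (1 - ‖μ‖) ^ 2 * ‖1 + μ‖ ^ 2 * hnorm
      + c * (1 - ‖μ‖) ^ 2 * ‖μ‖ * ‖z‖ * hplus - ‖z‖ * (1 + ‖μ‖) ^ 2 * ‖μ‖ ^ 2 / 2 * hs2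
      + ‖z‖ * (1 + ‖μ‖) ^ 2 / 2 * hre
  have hslack : 0 ≤ c * ‖z‖ * (1 - ‖μ‖) ^ 4 * (‖μ‖ - μ.re) / 2 := by
    have := sub_nonneg.mpr (Complex.re_le_norm μ)
    positivity
  have hle : ‖z‖ * s * (1 + ‖μ‖) * ‖μ‖ ≤ c * (1 - ‖μ‖) * (‖1 - μ‖ * ‖1 + μ‖) := by
    have : 0 ≤ 1 - ‖μ‖ := by linarith
    exact (pow_le_pow_iff_left₀ (by positivity) (by positivity) two_ne_zero).mp (by linarith)
  rw [← hfac] at hle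
  exact le_of_mul_le_mul_right (by linarith) hm0

theorem exists_norm_lt_one_mul_sq_eq {c : ℝ} (hc : c ≠ 0) {z : ℂ} (hz : z.im ≠ 0) :
    ∃ μ : ℂ, μ ≠ 0 ∧ ‖μ‖ < 1 ∧ (c : ℂ) * (1 - μ) ^ 2 = z * μ := by
  have hc' : (c : ℂ) ≠ 0 := Complex.ofReal_ne_zero.mpr hc
  obtain ⟨μ, hμ⟩ := exists_quadratic_eq_zero hc'
    (IsAlgClosed.exists_eq_mul_self (discrim (c : ℂ) (-(z + 2 * c)) c))
  have hroot : (c : ℂ) * (1 - μ) ^ 2 = z * μ := by linear_combination hμ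
  have hμ0 : μ ≠ 0 := by
    rintro rfl
    exact hc' (by simpa using hroot)
  -- on the unit circle `μ⁻¹ = conj μ`, so `z = c (μ + μ⁻¹ - 2)` would be real
  have hμ1 : ‖μ‖ ≠ 1 := by
    intro h1
    have hz' : z = c * (μ + μ⁻¹ - 2) := by
      field_simp
      linear_combination -hroot
    have hnormSq : Complex.normSq μ = 1 := by rw [Complex.normSq_eq_norm_sq, h1, one_pow]
    apply hz
    rw [hz']
    simp [Complex.inv_im, hnormSq]
  rcases hμ1.lt_or_gt with hlt | hgt
  · exact ⟨μ, hμ0, hlt, hroot⟩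
  · refine ⟨μ⁻¹, inv_ne_zero hμ0, by rwa [norm_inv, inv_lt_one₀ (norm_pos_iff.mpr hμ0)], ?_⟩
    field_simp
    linear_combination hroot

/-- The hypothesis `hs2` says `s = cos (arg z / 2)`. -/
theorem tridiagToeplitz_exists_right_inv_matNormC_le {N : ℕ} {c : ℝ} (hc : 0 < c) {z : ℂ}
    (hz : z.im ≠ 0) {s : ℝ} (hs : 0 < s) (hs2 : 2 * ‖z‖ * s ^ 2 = ‖z‖ + z.re) :
    ∃ G, tridiagToeplitz N (z + 2 * (c : ℂ)) (-(c : ℂ)) * G = 1 ∧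
      matNormC G ≤ 1 / (‖z‖ * s) := by
  obtain ⟨μ, hμ0, hμ1, hμ⟩ := exists_norm_lt_one_mul_sq_eq hc.ne' hz
  have hc' : (c : ℂ) ≠ 0 := Complex.ofReal_ne_zero.mpr hc.ne'
  have hd : z + 2 * (c : ℂ) = c * (μ + μ⁻¹) := by
    field_simp
    linear_combination -hμ
  have hφ1 := norm_invPowSubPow_pos hμ0 hμ1 one_ne_zero
  have hW : (c : ℂ) * invPowSubPow μ 1 * invPowSubPow μ (N + 1) ≠ 0 :=
    mul_ne_zero (mul_ne_zero hc' (norm_pos_iff.mp hφ1))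
      (norm_pos_iff.mp (norm_invPowSubPow_pos hμ0 hμ1 N.succ_ne_zero))
  have hzn : 0 < ‖z‖ := norm_pos_iff.mpr fun h => hz (by simp [h])
  have hkey := norm_mul_mul_one_add_norm_le hc.le hμ0 hμ1 hμ hs.le hs2
  refine ⟨_, hd ▸ tridiagToeplitz_mul_greenFun (by simp [invPowSubPow])
    (invPowSubPow_recurrence hμ0 (c : ℂ)) hW, Real.iSup_le (fun i => ?_) (by positivity)⟩
  simp only [of_apply]
  rw [Fin.sum_univ_eq_sum_range
    (fun b => ‖greenFun N (c : ℂ) (invPowSubPow μ) (i + 1) (b + 1)‖)]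
  refine (sum_range_norm_greenFun_le hμ0 hμ1 hc' i.isLt).trans ?_
  rw [Complex.norm_real, Real.norm_of_nonneg hc.le,
    div_le_div_iff₀ (by have := sub_pos.mpr hμ1; positivity) (by positivity)]
  simp only [invPowSubPow, pow_one]
  linarith

theorem im_ne_zero_and_norm_eq_of_eq_neg_mul_exp {ρ α : ℝ} (hρ : 0 < ρ)
    (hsin : Real.sin α ≠ 0) {z : ℂ} (hz : z = -((ρ : ℂ) * Complex.exp (↑α * Complex.I)) ∨
      z = -((ρ : ℂ) * Complex.exp (-↑α * Complex.I))) :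
    z.im ≠ 0 ∧ ‖z‖ = ρ ∧ 2 * ‖z‖ * Real.sin (α / 2) ^ 2 = ‖z‖ + z.re := by
  obtain ⟨θ, rfl, hcos, hsinθ⟩ : ∃ θ : ℝ, z = -((ρ : ℂ) * Complex.exp (θ * Complex.I)) ∧
      Real.cos θ = Real.cos α ∧ Real.sin θ ≠ 0 := by
    rcases hz with rfl | rfl
    · exact ⟨α, rfl, rfl, hsin⟩
    · exact ⟨-α, by push_cast; rfl, Real.cos_neg α, by simpa using hsin⟩
  have hzn : ‖-((ρ : ℂ) * Complex.exp (θ * Complex.I))‖ = ρ := by simp [hρ.le]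
  refine ⟨by simp [Complex.exp_ofReal_mul_I_im, hρ.ne', hsinθ], hzn, ?_⟩
  rw [hzn, Real.sin_sq_eq_half_sub, mul_div_cancel₀ _ two_ne_zero]
  simp only [Complex.neg_re, Complex.mul_re, Complex.ofReal_re, Complex.exp_ofReal_mul_I_re,
    hcos, Complex.ofReal_im, Complex.exp_ofReal_mul_I_im, zero_mul, sub_zero]
  ring

theorem stmt9_general (N : ℕ) (α τ β : ℝ)
    (hα0 : 0 < α) (hα : α ≤ Real.pi / 4) (hτ : 0 < τ) (hβ : 0 < β)
    (ρ : ℝ) (hρ : 0 < ρ) (z : ℂ)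
    (hz : z = -((ρ : ℂ) * Complex.exp (↑α * Complex.I)) ∨
          z = -((ρ : ℂ) * Complex.exp (-↑α * Complex.I))) :
    IsUnit (z • (1 : Matrix (Fin N) (Fin N) ℂ) -
        ((τ * β : ℝ) : ℂ) • (lmat N).map Complex.ofReal) ∧
      matNormC (z • (1 : Matrix (Fin N) (Fin N) ℂ) -
          ((τ * β : ℝ) : ℂ) • (lmat N).map Complex.ofReal)⁻¹
        ≤ 1 / (ρ * Real.sin (α / 2)) := by
  have hsinα : 0 < Real.sin α :=
    Real.sin_pos_of_pos_of_lt_pi hα0 (by linarith [Real.pi_pos])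
  have hsin2 : 0 < Real.sin (α / 2) :=
    Real.sin_pos_of_pos_of_lt_pi (by linarith) (by linarith [Real.pi_pos])
  obtain ⟨hzim, hzn, hs2⟩ := im_ne_zero_and_norm_eq_of_eq_neg_mul_exp hρ hsinα.ne' hz
  obtain ⟨G, hAG, hG⟩ := tridiagToeplitz_exists_right_inv_matNormC_le (N := N)
    (by positivity : 0 < τ * β * ((N : ℝ) + 1) ^ 2) hzim hsin2 hs2
  rw [← smul_one_sub_smul_lmat] at hAG
  refine ⟨(Matrix.isUnit_iff_isUnit_det _).mpr (Matrix.isUnit_det_of_right_inverse hAG), ?_⟩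
  rw [Matrix.inv_eq_right_inv hAG, ← hzn]
  exact hG

theorem stmt9 (N : ℕ) (hN : 1 ≤ N) (α τ β : ℝ)
    (hα0 : 0 < α) (hα : α ≤ Real.pi / 4) (hτ : 0 < τ) (hβ : 0 < β)
    (ρ : ℝ) (hρ : 0 < ρ) (z : ℂ)
    (hz : z = -((ρ : ℂ) * Complex.exp (↑α * Complex.I)) ∨
          z = -((ρ : ℂ) * Complex.exp (-↑α * Complex.I))) :
    IsUnit (z • (1 : Matrix (Fin N) (Fin N) ℂ) -
        ((τ * β : ℝ) : ℂ) • (lmat N).map Complex.ofReal) ∧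
      matNormC (z • (1 : Matrix (Fin N) (Fin N) ℂ) -
          ((τ * β : ℝ) : ℂ) • (lmat N).map Complex.ofReal)⁻¹
        ≤ 1 / (ρ * Real.sin (α / 2)) :=
  stmt9_general N α τ β hα0 hα hτ hβ ρ hρ z hz
end

section
/- Let N_j ≥ 1, Δx_j = 1/(N_j+1), L_{N_j} = (1/Δx_j²)·tridiag(1,−2,1), let 0 < α ≤ π/4, τ > 0, and let 0 < β_j ≤ β and 0 < Δx ≤ Δx_j. Set r* = 8βτ/Δx². For every z = −r*·e^{iθ} with |θ| ≤ α, the matrix zI − τβ_j L_{N_j} is invertible and ‖(zI − τβ_j L_{N_j})⁻¹‖_∞ ≤ 2/r*. -/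
/-!
Writing `a = τ βⱼ (N+1)²`, the matrix `z I − τ βⱼ L_N` has diagonal entries `z + 2a` and at most
two nonzero off-diagonal entries per row, each of modulus `a`. Since `|z| = r*` and `r* ≥ 8a`,
`|z + 2a|² ≥ r*² − 4a r* + 4a² ≥ (r*/2 + 2a)²`, so the matrix is strictly row diagonally dominant
with margin `r*/2`. For such a matrix `M`, every vector satisfies `δ ‖y‖_∞ ≤ ‖M y‖_∞` (look at a
coordinate where `|yᵢ|` is maximal), hence `M` is invertible and `‖M⁻¹‖_∞ ≤ 1/δ`.
-/

open scoped BigOperators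

open Finset

section DiagonallyDominant

open Matrix

attribute [local instance] Matrix.linftyOpNormedAddCommGroup

variable {ι 𝕜 : Type*} [Fintype ι]

theorem matNormC_eq_linfty_opNorm (A : Matrix ι ι ℂ) : matNormC A = ‖A‖ := by
  rw [Matrix.linfty_opNorm_def, matNormC, Finset.sup_univ_eq_ciSup, NNReal.coe_iSup]
  simp only [NNReal.coe_sum, coe_nnnorm]

theorem mul_norm_le_norm_mulVec_of_diag_dominant [DecidableEq ι] [NormedField 𝕜]
    {M : Matrix ι ι 𝕜} {δ : ℝ} (hdom : ∀ i, ∑ j ∈ univ.erase i, ‖M i j‖ + δ ≤ ‖M i i‖)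
    (y : ι → 𝕜) :
    δ * ‖y‖ ≤ ‖M *ᵥ y‖ := by
  rcases isEmpty_or_nonempty ι with hι | hι
  · simp [Subsingleton.elim y 0]
  obtain ⟨m, -, hm⟩ := exists_max_image univ (fun j => ‖y j‖) univ_nonempty
  have hym : ‖y‖ = ‖y m‖ :=
    le_antisymm ((pi_norm_le_iff_of_nonneg (norm_nonneg _)).2 fun j => hm j (mem_univ j))
      (norm_le_pi_norm y m)
  have hrow : M m m * y m = (M *ᵥ y) m - ∑ j ∈ univ.erase m, M m j * y j := by
    rw [Matrix.mulVec, dotProduct, ← add_sum_erase _ _ (mem_univ m), add_sub_cancel_right]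
  have hoff : ‖∑ j ∈ univ.erase m, M m j * y j‖ ≤ (∑ j ∈ univ.erase m, ‖M m j‖) * ‖y m‖ := by
    rw [sum_mul]
    refine (norm_sum_le _ _).trans (sum_le_sum fun j _ => ?_)
    rw [norm_mul]
    exact mul_le_mul_of_nonneg_left (hm j (mem_univ j)) (norm_nonneg _)
  have hdiag : ‖M m m‖ * ‖y m‖ ≤ ‖(M *ᵥ y) m‖ + (∑ j ∈ univ.erase m, ‖M m j‖) * ‖y m‖ := by
    rw [← norm_mul, hrow]
    exact (norm_sub_le _ _).trans (add_le_add_right hoff _)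
  calc δ * ‖y‖ ≤ ‖(M *ᵥ y) m‖ := by
        rw [hym]; nlinarith [mul_le_mul_of_nonneg_right (hdom m) (norm_nonneg (y m))]
    _ ≤ ‖M *ᵥ y‖ := norm_le_pi_norm _ m

theorem linfty_opNorm_inv_le_of_diag_dominant [DecidableEq ι] [NontriviallyNormedField 𝕜]
    [NormedAlgebra ℝ 𝕜] {M : Matrix ι ι 𝕜} {δ : ℝ} (hδ : 0 < δ)
    (hdom : ∀ i, ∑ j ∈ univ.erase i, ‖M i j‖ + δ ≤ ‖M i i‖) :
    IsUnit M ∧ ‖M⁻¹‖ ≤ δ⁻¹ := by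
  have hdet : IsUnit M.det := isUnit_iff_ne_zero.2 <|
    det_ne_zero_of_sum_row_lt_diag fun i => by linarith [hdom i]
  refine ⟨(Matrix.isUnit_iff_isUnit_det M).2 hdet, ?_⟩
  rw [Matrix.linfty_opNorm_eq_opNorm]
  refine ContinuousLinearMap.opNorm_le_bound _ (inv_nonneg.2 hδ.le) fun x => ?_
  have h := mul_norm_le_norm_mulVec_of_diag_dominant hdom (M⁻¹ *ᵥ x)
  rw [Matrix.mulVec_mulVec, Matrix.mul_nonsing_inv M hdet, Matrix.one_mulVec] at h
  rw [inv_mul_eq_div, le_div_iff₀ hδ, mul_comm]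
  exact h

theorem matNormC_inv_le_of_diag_dominant [DecidableEq ι] {M : Matrix ι ι ℂ} {δ : ℝ} (hδ : 0 < δ)
    (hdom : ∀ i, ∑ j ∈ univ.erase i, ‖M i j‖ + δ ≤ ‖M i i‖) :
    IsUnit M ∧ matNormC M⁻¹ ≤ δ⁻¹ := by
  rw [matNormC_eq_linfty_opNorm]
  exact linfty_opNorm_inv_le_of_diag_dominant hδ hdom

end DiagonallyDominant

theorem lmat_apply_self (N : ℕ) (i : Fin N) : lmat N i i = -2 * ((N : ℝ) + 1) ^ 2 := by
  simp [lmat, mul_comm]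

theorem card_filter_adjacent_le_two {N : ℕ} (i : Fin N) :
    #{j : Fin N | (i : ℕ) + 1 = j ∨ (j : ℕ) + 1 = i} ≤ 2 := by
  rw [filter_or]
  refine (card_union_le _ _).trans (add_le_add (b := 1) (d := 1) ?_ ?_) <;>
    exact card_le_one.2 fun j hj k hk => by simp only [mem_filter] at hj hk; omega

theorem sum_erase_abs_lmat_le {N : ℕ} (i : Fin N) :
    ∑ j ∈ univ.erase i, |lmat N i j| ≤ 2 * ((N : ℝ) + 1) ^ 2 := by
  have hterm : ∀ j ∈ univ.erase i, |lmat N i j|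
      = ((N : ℝ) + 1) ^ 2 * if (i : ℕ) + 1 = j ∨ (j : ℕ) + 1 = i then 1 else 0 := by
    intro j hj
    have hij : (i : ℕ) ≠ j := fun h => ne_of_mem_erase hj (Fin.ext h).symm
    simp only [lmat, Matrix.of_apply, if_neg hij, abs_mul, abs_sq]
    split_ifs <;> simp
  calc ∑ j ∈ univ.erase i, |lmat N i j|
      = ((N : ℝ) + 1) ^ 2 * ∑ j ∈ univ.erase i,
          if (i : ℕ) + 1 = j ∨ (j : ℕ) + 1 = i then (1 : ℝ) else 0 := by
        rw [sum_congr rfl hterm, mul_sum]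
    _ ≤ ((N : ℝ) + 1) ^ 2 *
          ∑ j : Fin N, if (i : ℕ) + 1 = j ∨ (j : ℕ) + 1 = i then (1 : ℝ) else 0 := by
        gcongr
        exact erase_subset _ _
    _ ≤ 2 * ((N : ℝ) + 1) ^ 2 := by
        rw [sum_boole, mul_comm]
        gcongr
        exact_mod_cast card_filter_adjacent_le_two i

section ShiftedLaplacian

variable {N : ℕ} (z : ℂ) (c : ℝ)

theorem shift_lmat_apply_self (i : Fin N) :
    (z • (1 : Matrix (Fin N) (Fin N) ℂ) - (c : ℂ) • (lmat N).map Complex.ofReal) i i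
      = z + ((2 * (c * ((N : ℝ) + 1) ^ 2) : ℝ) : ℂ) := by
  simp only [Matrix.sub_apply, Matrix.smul_apply, Matrix.one_apply_eq, Matrix.map_apply,
    lmat_apply_self, smul_eq_mul]
  push_cast
  ring

theorem norm_shift_lmat_apply_of_ne {i j : Fin N} (hij : i ≠ j) :
    ‖(z • (1 : Matrix (Fin N) (Fin N) ℂ) - (c : ℂ) • (lmat N).map Complex.ofReal) i j‖
      = |c| * |lmat N i j| := by
  simp [Matrix.one_apply_ne hij]

theorem diag_dominant_shift_lmat {δ : ℝ} (hc : 0 ≤ c)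
    (hz : δ + 2 * (c * ((N : ℝ) + 1) ^ 2) ≤ ‖z + ((2 * (c * ((N : ℝ) + 1) ^ 2) : ℝ) : ℂ)‖)
    (i : Fin N) :
    ∑ j ∈ univ.erase i,
        ‖(z • (1 : Matrix (Fin N) (Fin N) ℂ) - (c : ℂ) • (lmat N).map Complex.ofReal) i j‖ + δ
      ≤ ‖(z • (1 : Matrix (Fin N) (Fin N) ℂ) - (c : ℂ) • (lmat N).map Complex.ofReal) i i‖ := by
  rw [shift_lmat_apply_self, sum_congr rfl fun j hj =>
    norm_shift_lmat_apply_of_ne z c (ne_of_mem_erase hj).symm, ← mul_sum, abs_of_nonneg hc]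
  nlinarith [sum_erase_abs_lmat_le (N := N) i]

end ShiftedLaplacian

theorem half_add_le_norm_neg_mul_exp_add {a r : ℝ} (ha : 0 ≤ a) (hr : 8 * a ≤ r) (θ : ℝ) :
    r / 2 + 2 * a ≤ ‖-((r : ℂ) * Complex.exp (θ * Complex.I)) + ((2 * a : ℝ) : ℂ)‖ := by
  have hnormSq : ‖-((r : ℂ) * Complex.exp (θ * Complex.I)) + ((2 * a : ℝ) : ℂ)‖ ^ 2
      = r ^ 2 - 4 * a * r * Real.cos θ + 4 * a ^ 2 := by
    rw [Complex.sq_norm, Complex.normSq_apply]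
    simp only [Complex.add_re, Complex.add_im, Complex.neg_re, Complex.neg_im, Complex.mul_re,
      Complex.mul_im, Complex.ofReal_re, Complex.ofReal_im, Complex.exp_ofReal_mul_I_re,
      Complex.exp_ofReal_mul_I_im]
    linear_combination r ^ 2 * Real.sin_sq_add_cos_sq θ
  refine le_of_pow_le_pow_left₀ two_ne_zero (norm_nonneg _) ?_
  rw [hnormSq]
  nlinarith [Real.cos_le_one θ, mul_nonneg ha (sub_nonneg.2 (Real.cos_le_one θ))]

theorem sq_add_one_le_one_div_sq {N : ℕ} {Δx : ℝ} (hΔx0 : 0 < Δx)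
    (hΔx : Δx ≤ 1 / ((N : ℝ) + 1)) : ((N : ℝ) + 1) ^ 2 ≤ 1 / Δx ^ 2 := by
  rw [← one_div_pow]
  gcongr
  exact (le_one_div (by positivity) hΔx0).2 hΔx

theorem stmt10_general (Nj : ℕ) (τ β βj Δx : ℝ)
    (hτ : 0 < τ)
    (hβj : 0 < βj) (hβ : βj ≤ β)
    (hΔx0 : 0 < Δx) (hΔx : Δx ≤ 1 / ((Nj : ℝ) + 1))
    (θ : ℝ) (z : ℂ)
    (hz : z = -(((8 * β * τ / Δx ^ 2 : ℝ) : ℂ) * Complex.exp (↑θ * Complex.I))) :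
    IsUnit (z • (1 : Matrix (Fin Nj) (Fin Nj) ℂ) -
        ((τ * βj : ℝ) : ℂ) • (lmat Nj).map Complex.ofReal) ∧
      matNormC (z • (1 : Matrix (Fin Nj) (Fin Nj) ℂ) -
          ((τ * βj : ℝ) : ℂ) • (lmat Nj).map Complex.ofReal)⁻¹
        ≤ 2 / (8 * β * τ / Δx ^ 2) := by
  have hβ0 : 0 < β := hβj.trans_le hβ
  have h8a : 8 * (τ * βj * ((Nj : ℝ) + 1) ^ 2) ≤ 8 * β * τ / Δx ^ 2 := calc
    _ = 8 * (τ * βj) * ((Nj : ℝ) + 1) ^ 2 := by ring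
    _ ≤ 8 * (τ * β) * ((Nj : ℝ) + 1) ^ 2 := by gcongr
    _ ≤ 8 * (τ * β) * (1 / Δx ^ 2) := by gcongr; exact sq_add_one_le_one_div_sq hΔx0 hΔx
    _ = 8 * β * τ / Δx ^ 2 := by ring
  set r := 8 * β * τ / Δx ^ 2
  set a := τ * βj * ((Nj : ℝ) + 1) ^ 2
  have hr : 0 < r := by positivity
  have hdiag : r / 2 + 2 * a ≤ ‖z + ((2 * a : ℝ) : ℂ)‖ :=
    hz ▸ half_add_le_norm_neg_mul_exp_add (by positivity) h8a θ
  obtain ⟨hU, hinv⟩ := matNormC_inv_le_of_diag_dominant (half_pos hr)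
    (diag_dominant_shift_lmat z (τ * βj) (by positivity) hdiag)
  exact ⟨hU, hinv.trans_eq (by rw [inv_div])⟩

theorem stmt10 (Nj : ℕ) (hNj : 1 ≤ Nj) (α τ β βj Δx : ℝ)
    (hα0 : 0 < α) (hα : α ≤ Real.pi / 4) (hτ : 0 < τ)
    (hβj : 0 < βj) (hβ : βj ≤ β)
    (hΔx0 : 0 < Δx) (hΔx : Δx ≤ 1 / ((Nj : ℝ) + 1))
    (θ : ℝ) (hθ : |θ| ≤ α) (z : ℂ)
    (hz : z = -(((8 * β * τ / Δx ^ 2 : ℝ) : ℂ) * Complex.exp (↑θ * Complex.I))) :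
    IsUnit (z • (1 : Matrix (Fin Nj) (Fin Nj) ℂ) -
        ((τ * βj : ℝ) : ℂ) • (lmat Nj).map Complex.ofReal) ∧
      matNormC (z • (1 : Matrix (Fin Nj) (Fin Nj) ℂ) -
          ((τ * βj : ℝ) : ℂ) • (lmat Nj).map Complex.ofReal)⁻¹
        ≤ 2 / (8 * β * τ / Δx ^ 2) :=
  stmt10_general Nj τ β βj Δx hτ hβj hβ hΔx0 hΔx θ z hz
end
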